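/- arXiv:1811.00304 — 6 statements merged into one kernel-verified Lean document; each statement's English description precedes it below -/
import Mathlib

section
/- Let M be the comonotone copula (law of (U,U), U uniform on [0,1]) and W the countermonotone copula (law of (U,1-U)). The Wasserstein-1 distance between M and W with respect to the cost c(u,v)=|u_1-v_1|+|u_2-v_2| equals 1/2. -/
open MeasureTheory Set
open scoped ENNReal

/-- The uniform distribution on `[0,1]`. -/
noncomputable def unif : Measure ℝ := volume.restrict (Set.Icc (0:ℝ) 1)

/-- The comonotone copula: the law of `(U,U)` for `U` uniform on `[0,1]`. -/
noncomputable def Mcop : Measure (ℝ × ℝ) := unif.map (fun u => (u, u))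

/-- The countermonotone copula: the law of `(U,1-U)` for `U` uniform on `[0,1]`. -/
noncomputable def Wcop : Measure (ℝ × ℝ) := unif.map (fun u => (u, 1 - u))

/-- Optimal transport cost between measures on `[0,1]²` with cost
`c(u,v) = |u₁-v₁| + |u₂-v₂|` (Wasserstein-1 w.r.t. the `L¹`-metric). -/
noncomputable def transportCost (μ ν : Measure (ℝ × ℝ)) : ℝ≥0∞ :=
  ⨅ (π : Measure ((ℝ × ℝ) × (ℝ × ℝ)))
    (_ : π.map Prod.fst = μ) (_ : π.map Prod.snd = ν),
    ∫⁻ q, ENNReal.ofReal (|q.1.1 - q.2.1| + |q.1.2 - q.2.2|) ∂π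

/-- A (bivariate) copula: a probability measure on `[0,1]²` with uniform marginals. -/
def IsCopula (C : Measure (ℝ × ℝ)) : Prop :=
  IsProbabilityMeasure C ∧ C.map Prod.fst = unif ∧ C.map Prod.snd = unif

/-!
Coupling `U` with itself, i.e. transporting `(U, U)` to `(U, 1 - U)`, costs `E|2U - 1| = 1/2`.
Conversely `f(u) = |u₁ + u₂ - 1|` is `1`-Lipschitz for the `L¹` cost, equals `|2U - 1|` on the
support of `M` and vanishes on that of `W`, so every coupling costs at least
`∫ f dM - ∫ f dW = 1/2`.
-/

theorem transportCost_le_lintegral {μ ν : Measure (ℝ × ℝ)} (π : Measure ((ℝ × ℝ) × (ℝ × ℝ)))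
    (hμ : π.map Prod.fst = μ) (hν : π.map Prod.snd = ν) :
    transportCost μ ν ≤ ∫⁻ q, ENNReal.ofReal (|q.1.1 - q.2.1| + |q.1.2 - q.2.2|) ∂π :=
  iInf_le_of_le π <| iInf_le_of_le hμ <| iInf_le _ hν

theorem transportCost_map_le {α : Type*} [MeasurableSpace α] (ρ : Measure α) {X Y : α → ℝ × ℝ}
    (hX : Measurable X) (hY : Measurable Y) :
    transportCost (ρ.map X) (ρ.map Y) ≤
      ∫⁻ a, ENNReal.ofReal (|(X a).1 - (Y a).1| + |(X a).2 - (Y a).2|) ∂ρ := by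
  have hXY : Measurable fun a => (X a, Y a) := hX.prodMk hY
  calc transportCost (ρ.map X) (ρ.map Y)
      ≤ ∫⁻ q, ENNReal.ofReal (|q.1.1 - q.2.1| + |q.1.2 - q.2.2|) ∂ρ.map fun a => (X a, Y a) :=
        transportCost_le_lintegral _ (by rw [Measure.map_map measurable_fst hXY]; rfl)
          (by rw [Measure.map_map measurable_snd hXY]; rfl)
    _ = _ := lintegral_map (by fun_prop) hXY

theorem lintegral_le_transportCost_add {μ ν : Measure (ℝ × ℝ)} {f : ℝ × ℝ → ℝ}
    (hf : Measurable f) (hlip : ∀ p q : ℝ × ℝ, f p ≤ |p.1 - q.1| + |p.2 - q.2| + f q) :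
    ∫⁻ p, ENNReal.ofReal (f p) ∂μ ≤ transportCost μ ν + ∫⁻ q, ENNReal.ofReal (f q) ∂ν := by
  simp only [transportCost, ENNReal.iInf_add]
  refine le_iInf fun π => le_iInf fun hμ => le_iInf fun hν => ?_
  subst hμ hν
  rw [lintegral_map hf.ennreal_ofReal measurable_fst,
    lintegral_map hf.ennreal_ofReal measurable_snd]
  calc ∫⁻ q, ENNReal.ofReal (f q.1) ∂π
      ≤ ∫⁻ q, ENNReal.ofReal (|q.1.1 - q.2.1| + |q.1.2 - q.2.2|) + ENNReal.ofReal (f q.2) ∂π :=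
        lintegral_mono fun q =>
          (ENNReal.ofReal_le_ofReal (hlip q.1 q.2)).trans ENNReal.ofReal_add_le
    _ = _ := lintegral_add_right _ (hf.comp measurable_snd).ennreal_ofReal

open intervalIntegral in
theorem integral_abs_two_mul_sub_one : ∫ x in (0:ℝ)..1, |2 * x - 1| = 1 / 2 := by
  have hlow : ∫ x in (0:ℝ)..(1/2), |2 * x - 1| = 1 / 4 := by
    rw [integral_congr (g := fun x => 1 - 2 * x) fun x hx => by
        rw [uIcc_of_le (by norm_num)] at hx
        simp only [abs_of_nonpos (by linarith [hx.2] : 2 * x - 1 ≤ 0), neg_sub],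
      integral_sub intervalIntegrable_const (intervalIntegrable_id.const_mul 2),
      intervalIntegral.integral_const_mul]
    norm_num [integral_id]
  have hhigh : ∫ x in (1/2:ℝ)..1, |2 * x - 1| = 1 / 4 := by
    rw [integral_congr (g := fun x => 2 * x - 1) fun x hx => by
        rw [uIcc_of_le (by norm_num)] at hx
        simp only [abs_of_nonneg (by linarith [hx.1] : 0 ≤ 2 * x - 1)],
      integral_sub (intervalIntegrable_id.const_mul 2) intervalIntegrable_const,
      intervalIntegral.integral_const_mul]
    norm_num [integral_id]
  have hint (a b : ℝ) : IntervalIntegrable (fun x : ℝ => |2 * x - 1|) volume a b :=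
    (by fun_prop : Continuous fun x : ℝ => |2 * x - 1|).intervalIntegrable a b
  rw [← integral_add_adjacent_intervals (hint 0 (1/2)) (hint (1/2) 1), hlow, hhigh]
  norm_num

theorem lintegral_unif_abs_two_mul_sub_one :
    ∫⁻ u, ENNReal.ofReal |2 * u - 1| ∂unif = 1 / 2 := by
  rw [unif, ← ofReal_integral_eq_lintegral_ofReal
      ((by fun_prop : Continuous fun u : ℝ => |2 * u - 1|).continuousOn.integrableOn_compact
        isCompact_Icc)
      (Filter.Eventually.of_forall fun _ => abs_nonneg _),
    integral_Icc_eq_integral_Ioc, ← intervalIntegral.integral_of_le zero_le_one,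
    integral_abs_two_mul_sub_one, ENNReal.ofReal_div_of_pos two_pos]
  simp

/-- The Wasserstein-1 distance (w.r.t. the `L¹` cost) between the
comonotone copula `M` and the countermonotone copula `W` equals `1/2`. -/
theorem transportCost_comonotone_countermonotone :
    transportCost Mcop Wcop = 1 / 2 := by
  apply le_antisymm
  · calc transportCost Mcop Wcop ≤ ∫⁻ u, ENNReal.ofReal (|u - u| + |u - (1 - u)|) ∂unif :=
          transportCost_map_le unif (by fun_prop) (by fun_prop)
      _ = 1 / 2 := by
          simp only [sub_self, abs_zero, zero_add, sub_sub_eq_add_sub, ← two_mul]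
          exact lintegral_unif_abs_two_mul_sub_one
  · have hM : ∫⁻ p, ENNReal.ofReal |p.1 + p.2 - 1| ∂Mcop = 1 / 2 := by
      rw [Mcop, lintegral_map (by fun_prop) (by fun_prop)]
      simpa only [← two_mul] using lintegral_unif_abs_two_mul_sub_one
    have hW : ∫⁻ p, ENNReal.ofReal |p.1 + p.2 - 1| ∂Wcop = 0 := by
      rw [Wcop, lintegral_map (by fun_prop) (by fun_prop)]
      simp
    have key := lintegral_le_transportCost_add (μ := Mcop) (ν := Wcop)
      (f := fun p => |p.1 + p.2 - 1|) (by fun_prop) fun p q => by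
        calc |p.1 + p.2 - 1| = |(p.1 - q.1) + (p.2 - q.2) + (q.1 + q.2 - 1)| := by ring_nf
          _ ≤ _ := abs_add_three _ _ _
    rwa [hM, hW, add_zero] at key
end

section
/- For any copula C on [0,1]^2 (probability measure with uniform marginals) and the comonotone copula M, the Wasserstein-1 distance d_c(M, C) with c(u,v)=|u_1-v_1|+|u_2-v_2| satisfies d_c(M,C) ≤ 1/2, and the bound equals ∫|u_1-u_2| dW(u) where W is the countermonotone copula; in particular the countermonotone copula maximizes d_c(M, ·) over copulas. -/
open MeasureTheory Set
open scoped ENNReal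

/-! The coupling `u ↦ ((u₁, u₁), u)` of `M` and `C` moves only the second coordinate, so
`d_c(M, C) ≤ ∫ |u₁ - u₂| dC`; conversely, if the first point `(a, a)` of a coupling is
`M`-distributed, then `|v₁ - v₂| ≤ |a - v₁| + |a - v₂|`. Hence `d_c(M, C)` is Spearman's footrule
of `C`. By the triangle inequality through `½`, the footrule of a copula is at most
`∫ |u₁ - ½| dC + ∫ |u₂ - ½| dC = 2 ∫₀¹ |x - ½| dx = ½`, with equality for `W` because
`|u - (1 - u)| = 2 |u - ½|`. -/

theorem integral_abs_sub_of_mem_Icc {a b c : ℝ} (hac : a ≤ c) (hcb : c ≤ b) :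
    ∫ x in a..b, |x - c| = ((c - a) ^ 2 + (b - c) ^ 2) / 2 := by
  have hint (p q : ℝ) : IntervalIntegrable (fun x => |x - c|) volume p q :=
    (by fun_prop : Continuous fun x : ℝ => |x - c|).intervalIntegrable p q
  have hleft := integral_pow_abs_sub_uIoc (a := c) (b := a) (n := 1)
  have hright := integral_pow_abs_sub_uIoc (a := c) (b := b) (n := 1)
  rw [uIoc_of_ge hac, ← intervalIntegral.integral_of_le hac] at hleft
  rw [uIoc_of_le hcb, ← intervalIntegral.integral_of_le hcb] at hright
  simp only [pow_one] at hleft hright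
  rw [← intervalIntegral.integral_add_adjacent_intervals (hint a c) (hint c b), hleft, hright,
    abs_of_nonpos (sub_nonpos.2 hac), abs_of_nonneg (sub_nonneg.2 hcb)]
  ring

theorem two_mul_lintegral_unif_abs_sub_half :
    2 * ∫⁻ x, ENNReal.ofReal |x - 1 / 2| ∂unif = 1 / 2 := by
  rw [unif, ← ofReal_integral_eq_lintegral_ofReal
      (by fun_prop : Continuous fun x : ℝ => |x - 1 / 2|).integrableOn_Icc
      (Filter.Eventually.of_forall fun _ => abs_nonneg _),
    integral_Icc_eq_integral_Ioc, ← intervalIntegral.integral_of_le zero_le_one,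
    integral_abs_sub_of_mem_Icc (by norm_num) (by norm_num), ← ENNReal.ofReal_ofNat 2,
    ← ENNReal.ofReal_mul zero_le_two]
  norm_num [ENNReal.ofReal_div_of_pos]

theorem lintegral_abs_sub_le_two_mul_of_map_eq {C : Measure (ℝ × ℝ)} {ν : Measure ℝ}
    (h₁ : C.map Prod.fst = ν) (h₂ : C.map Prod.snd = ν) (c : ℝ) :
    ∫⁻ u, ENNReal.ofReal |u.1 - u.2| ∂C ≤ 2 * ∫⁻ x, ENNReal.ofReal |x - c| ∂ν := by
  have hf : Measurable fun x : ℝ => ENNReal.ofReal |x - c| := by fun_prop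
  calc ∫⁻ u, ENNReal.ofReal |u.1 - u.2| ∂C
      ≤ ∫⁻ u, ENNReal.ofReal |u.1 - c| + ENNReal.ofReal |u.2 - c| ∂C := by
        refine lintegral_mono fun u => ?_
        rw [← ENNReal.ofReal_add (abs_nonneg _) (abs_nonneg _)]
        exact ENNReal.ofReal_le_ofReal (abs_sub_comm u.2 c ▸ abs_sub_le u.1 c u.2)
    _ = 2 * ∫⁻ x, ENNReal.ofReal |x - c| ∂ν := by
        rw [lintegral_add_left (f := fun u : ℝ × ℝ => ENNReal.ofReal |u.1 - c|) (by fun_prop),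
          two_mul, ← lintegral_map hf measurable_fst, ← lintegral_map hf measurable_snd, h₁, h₂]

theorem IsCopula.lintegral_abs_sub_le_half {C : Measure (ℝ × ℝ)} (hC : IsCopula C) :
    ∫⁻ u, ENNReal.ofReal |u.1 - u.2| ∂C ≤ 1 / 2 :=
  (lintegral_abs_sub_le_two_mul_of_map_eq hC.2.1 hC.2.2 (1 / 2)).trans_eq
    two_mul_lintegral_unif_abs_sub_half

theorem lintegral_abs_sub_Wcop : ∫⁻ u, ENNReal.ofReal |u.1 - u.2| ∂Wcop = 1 / 2 := by
  rw [Wcop, lintegral_map (by fun_prop) (by fun_prop), ← two_mul_lintegral_unif_abs_sub_half,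
    ← lintegral_const_mul _ (by fun_prop)]
  refine lintegral_congr fun u => ?_
  rw [show u - (1 - u) = 2 * (u - 1 / 2) by ring, abs_mul, abs_two,
    ENNReal.ofReal_mul zero_le_two, ENNReal.ofReal_ofNat]

theorem map_fst_Wcop : Wcop.map Prod.fst = unif := by
  rw [Wcop, Measure.map_map measurable_fst (by fun_prop)]
  exact Measure.map_id

theorem ae_fst_fst_eq_fst_snd_of_map_fst_eq_Mcop {β : Type*} [MeasurableSpace β]
    {π : Measure ((ℝ × ℝ) × β)} (h : π.map Prod.fst = Mcop) : ∀ᵐ q ∂π, q.1.1 = q.1.2 := by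
  have hdiag : MeasurableSet {u : ℝ × ℝ | u.1 = u.2} :=
    measurableSet_eq_fun measurable_fst measurable_snd
  have hMcop : ∀ᵐ u ∂Mcop, u.1 = u.2 :=
    (ae_map_iff (by fun_prop) hdiag).2 (Filter.Eventually.of_forall fun _ => rfl)
  rw [← h] at hMcop
  exact (ae_map_iff (by fun_prop) hdiag).1 hMcop

theorem lintegral_abs_sub_map_snd_le_of_map_fst_eq_Mcop {π : Measure ((ℝ × ℝ) × (ℝ × ℝ))}
    (h : π.map Prod.fst = Mcop) :
    ∫⁻ v, ENNReal.ofReal |v.1 - v.2| ∂(π.map Prod.snd) ≤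
      ∫⁻ q, ENNReal.ofReal (|q.1.1 - q.2.1| + |q.1.2 - q.2.2|) ∂π := by
  rw [lintegral_map (by fun_prop) measurable_snd]
  refine lintegral_mono_ae ((ae_fst_fst_eq_fst_snd_of_map_fst_eq_Mcop h).mono fun q hq => ?_)
  refine ENNReal.ofReal_le_ofReal ?_
  rw [← hq, abs_sub_comm q.1.1 q.2.1]
  exact abs_sub_le _ _ _

theorem transportCost_Mcop_eq_lintegral_abs_sub {C : Measure (ℝ × ℝ)}
    (hC : C.map Prod.fst = unif) :
    transportCost Mcop C = ∫⁻ u, ENNReal.ofReal |u.1 - u.2| ∂C := by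
  refine le_antisymm ?_ (le_iInf fun π => le_iInf₂ fun h₁ h₂ =>
    h₂ ▸ lintegral_abs_sub_map_snd_le_of_map_fst_eq_Mcop h₁)
  set g : ℝ × ℝ → (ℝ × ℝ) × (ℝ × ℝ) := fun u => ((u.1, u.1), u)
  have hg : Measurable g := by fun_prop
  have h₁ : (C.map g).map Prod.fst = Mcop := by
    rw [Measure.map_map measurable_fst hg, Mcop, ← hC,
      Measure.map_map (by fun_prop) measurable_fst]
    rfl
  have h₂ : (C.map g).map Prod.snd = C := by
    rw [Measure.map_map measurable_snd hg]
    exact Measure.map_id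
  refine iInf₂_le_of_le (C.map g) h₁ (iInf_le_of_le h₂ ?_)
  rw [lintegral_map (by fun_prop) hg]
  simp [g]

/-- For any copula `C`, `d_c(M,C) ≤ 1/2`; the bound `1/2` equals
`∫ |u₁-u₂| dW(u)` for the countermonotone copula `W`; in particular the countermonotone
copula maximizes `d_c(M,·)` over copulas. -/
theorem transportCost_comonotone_le_half
    (C : Measure (ℝ × ℝ)) (hC : IsCopula C) :
    transportCost Mcop C ≤ 1 / 2 ∧
    (1 / 2 : ℝ≥0∞) = ∫⁻ u, ENNReal.ofReal |u.1 - u.2| ∂Wcop ∧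
    transportCost Mcop C ≤ transportCost Mcop Wcop := by
  rw [transportCost_Mcop_eq_lintegral_abs_sub hC.2.1,
    transportCost_Mcop_eq_lintegral_abs_sub map_fst_Wcop, lintegral_abs_sub_Wcop]
  exact ⟨hC.lintegral_abs_sub_le_half, rfl, hC.lintegral_abs_sub_le_half⟩
end

section
/- With R_α defined as the copula agreeing with the countermonotone copula on [(1-α)/2,(1+α)/2]^2 and the comonotone copula elsewhere, for α = √(2ρ) with ρ ≤ 1/2 it holds that ∫_{[0,1]^2} max(u_1,u_2) dR_{√(2ρ)}(u) = (1+ρ)/2. -/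
open MeasureTheory Set
open scoped ENNReal

/-- The map defining the copula `R_α`: `u ↦ (u, 1-u)` on `[(1-α)/2, (1+α)/2]`
and `u ↦ (u,u)` otherwise. -/
noncomputable def Tmap (α : ℝ) (u : ℝ) : ℝ × ℝ :=
  if (1 - α) / 2 ≤ u ∧ u ≤ (1 + α) / 2 then (u, 1 - u) else (u, u)

/-- The copula `R_α`: countermonotone on `[(1-α)/2,(1+α)/2]²` and comonotone outside. -/
noncomputable def Rcop (α : ℝ) : Measure (ℝ × ℝ) := unif.map (Tmap α)

lemma Tmap_measurable (α : ℝ) : Measurable (Tmap α) := by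
  have : Tmap α = (Set.Icc ((1-α)/2) ((1+α)/2)).piecewise
      (fun u => (u, 1-u)) (fun u => (u, u)) := by
    funext u
    simp [Tmap, Set.piecewise, Set.mem_Icc]
  rw [this]
  exact Measurable.piecewise measurableSet_Icc (by fun_prop) (by fun_prop)

/-- For `ρ ∈ [0,1/2]` and `α = √(2ρ)`,
`∫ max(u₁,u₂) dR_{√(2ρ)}(u) = (1+ρ)/2`. -/
theorem expected_max_Rcop (ρ : ℝ) (hρ : ρ ∈ Set.Icc (0:ℝ) (1/2)) :
    ∫ u, max u.1 u.2 ∂(Rcop (Real.sqrt (2 * ρ))) = (1 + ρ) / 2 := by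
  obtain ⟨hρ0, hρ1⟩ := hρ
  set α := Real.sqrt (2 * ρ) with hαdef
  have hα0 : 0 ≤ α := Real.sqrt_nonneg _
  have hα2 : α ^ 2 = 2 * ρ := by
    rw [hαdef, Real.sq_sqrt (by linarith)]
  have hα1 : α ≤ 1 := by nlinarith
  set a := (1 - α) / 2 with hadef
  have ha0 : 0 ≤ a := by rw [hadef]; linarith
  have hahalf : a ≤ 1/2 := by rw [hadef]; linarith
  rw [Rcop, integral_map (Tmap_measurable α).aemeasurable
    (by fun_prop : Measurable fun p : ℝ × ℝ => max p.1 p.2).aestronglyMeasurable]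
  have key : ∀ u : ℝ, max (Tmap α u).1 (Tmap α u).2
      = u + Set.indicator (Set.Icc a (1/2)) (fun u => 1 - 2*u) u := by
    intro u
    rw [Tmap]
    rcases le_or_gt u (1/2) with h | h
    · split_ifs with hc
      · have : u ∈ Set.Icc a (1/2) := ⟨hc.1, h⟩
        simp only [Set.indicator_of_mem this]
        have : u ≤ 1 - u := by linarith
        simp [max_eq_right this]; ring
      · have : u ∉ Set.Icc a (1/2) := by
          intro hm
          exact hc ⟨hm.1, by linarith [hm.2]⟩
        rw [Set.indicator_of_notMem this]; simp
    · have hnm : u ∉ Set.Icc a (1/2) := by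
        intro hm; linarith [hm.2]
      simp only [Set.indicator_of_notMem hnm]
      split_ifs with hc
      · have : 1 - u ≤ u := by linarith
        simp [max_eq_left this]
      · simp
  simp_rw [key]
  rw [unif]
  have hint1 : IntegrableOn (fun u : ℝ => u) (Set.Icc (0:ℝ) 1) volume :=
    (continuous_id.integrableOn_Icc)
  have hint2 : IntegrableOn
      (Set.indicator (Set.Icc a (1/2)) (fun u : ℝ => 1 - 2*u)) (Set.Icc (0:ℝ) 1) volume :=
    ((continuous_const.sub (continuous_const.mul continuous_id)).integrableOn_Icc).indicator
      measurableSet_Icc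
  rw [integral_add hint1 hint2]
  have h1 : ∫ u in Set.Icc (0:ℝ) 1, u = 1/2 := by
    rw [MeasureTheory.integral_Icc_eq_integral_Ioc,
      ← intervalIntegral.integral_of_le (by norm_num : (0:ℝ) ≤ 1)]
    simp
  have h2 : ∫ u in Set.Icc (0:ℝ) 1,
      Set.indicator (Set.Icc a (1/2)) (fun u : ℝ => 1 - 2*u) u = ρ / 2 := by
    rw [setIntegral_indicator measurableSet_Icc]
    have : Set.Icc (0:ℝ) 1 ∩ Set.Icc a (1/2) = Set.Icc a (1/2) := by
      apply Set.inter_eq_self_of_subset_right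
      exact Set.Icc_subset_Icc ha0 (by norm_num)
    rw [this, MeasureTheory.integral_Icc_eq_integral_Ioc,
      ← intervalIntegral.integral_of_le hahalf]
    have : ∫ u in a..(1/2), (1 - 2*u) = (1/2 - a) - ((1/2)^2 - a^2) := by
      rw [intervalIntegral.integral_sub intervalIntegrable_const
        ((intervalIntegral.intervalIntegrable_id).const_mul 2)]
      rw [intervalIntegral.integral_const, intervalIntegral.integral_const_mul,
        integral_id]
      simp [smul_eq_mul]; ring
    rw [this, hadef]
    nlinarith [hα2]
  rw [h1, h2]; ring
end

section
/- Discretization of couplings with bounded density: Let X_i be Polish spaces for i=1,...,d, μ_i ∈ P(X_i), ν a coupling of (μ_1,...,μ_d), and μ = μ_1 ⊗ ... ⊗ μ_d the product measure. Then there exist couplings ν^n of (μ_1,...,μ_d) and finite constants C_n > 0 such that ν^n converges weakly to ν, each ν^n is absolutely continuous with respect to μ, and dν^n/dμ ≤ C_n μ-almost surely. -/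
open MeasureTheory ProbabilityTheory Set Filter Topology
open scoped ENNReal BoundedContinuousFunction

/-!
Partition each `X i` according to which of the first `n` sets of a countable basis contain a
point. On every product cell `C`, replace `ν` by `ν C` times the normalised product measure
`(Measure.pi μ)[|C] = Measure.pi (fun i => (μ i)[|C i])`. The marginals are still `μ i`: summing
over the cells with a fixed `i`-th side `C i` gives `ν (x i ∈ C i) = μ i (C i)`. The density is
`ν C / (Measure.pi μ) C` on `C`, which is finite because `ν C ≤ μ i (C i)` for every `i`. Each cell
keeps its `ν`-mass, so `∫ f` moves by at most the `ν`-average oscillation of `f` over the cells,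
and this tends to `0` by dominated convergence because the cells shrink to points.
-/

theorem Set.preimage_piMap_singleton {ι : Type*} {X κ : ι → Type*} (q : ∀ i, X i → κ i)
    (t : ∀ i, κ i) : Pi.map q ⁻¹' {t} = univ.pi fun i => q i ⁻¹' {t i} := by
  ext x
  simp [funext_iff]

theorem tendsto_univ_pi_smallSets {ι β : Type*} [Finite ι] {Y : ι → Type*}
    [∀ i, TopologicalSpace (Y i)] {l : Filter β} {s : β → ∀ i, Set (Y i)} {x : ∀ i, Y i}
    (h : ∀ i, Tendsto (fun n => s n i) l (𝓝 (x i)).smallSets) :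
    Tendsto (fun n => (univ.pi (s n) : Set (∀ i, Y i))) l (𝓝 x).smallSets := by
  refine tendsto_smallSets_iff.2 fun U hU => ?_
  rw [nhds_pi, Filter.mem_pi] at hU
  obtain ⟨I, -, t, ht, hIU⟩ := hU
  filter_upwards [eventually_all.2 fun i => tendsto_smallSets_iff.1 (h i) (t i) (ht i)]
    with n hn y hy
  exact hIU fun i _ => hn i (hy i (mem_univ i))

theorem tendsto_diam_image_of_tendsto_smallSets {α β γ : Type*} [TopologicalSpace α]
    [PseudoMetricSpace β] {f : α → β} {x : α} (hf : ContinuousAt f x) {l : Filter γ}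
    {s : γ → Set α} (hs : Tendsto s l (𝓝 x).smallSets) :
    Tendsto (fun n => Metric.diam (f '' s n)) l (𝓝 0) := by
  have hfs : Tendsto (fun n => f '' s n) l (𝓝 (f x)).smallSets :=
    hf.tendsto.image_smallSets.comp hs
  refine Metric.tendsto_nhds.2 fun ε hε => ?_
  have hball : Metric.closedBall (f x) (ε / 3) ∈ 𝓝 (f x) :=
    Metric.closedBall_mem_nhds (f x) (by positivity)
  filter_upwards [tendsto_smallSets_iff.1 hfs _ hball] with n hn
  rw [Real.dist_0_eq_abs, abs_of_nonneg Metric.diam_nonneg]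
  linarith [Metric.diam_le_of_subset_closedBall (by positivity) hn]

theorem exists_measurable_tendsto_smallSets_preimage (α : Type*)
    [TopologicalSpace α] [SecondCountableTopology α] [MeasurableSpace α] [OpensMeasurableSpace α] :
    ∃ q : ∀ n : ℕ, α → Fin n → Prop, (∀ n, Measurable (q n)) ∧
      ∀ z, Tendsto (fun n => q n ⁻¹' {q n z}) atTop (𝓝 z).smallSets := by
  obtain ⟨b, hbc, -, hb⟩ := TopologicalSpace.exists_countable_basis α
  let V := enumerateCountable hbc ∅
  have hV : ∀ k, IsOpen (V k) := fun k => by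
    rcases range_enumerateCountable_subset hbc ∅ (mem_range_self k) with h | h
    · simp only [V, h, isOpen_empty]
    · exact hb.isOpen h
  refine ⟨fun n z k => z ∈ V k,
    fun n => measurable_pi_lambda _ fun k => measurableSet_setOfPred.1 (hV k).measurableSet,
    fun z => tendsto_smallSets_iff.2 fun U hU => ?_⟩
  obtain ⟨W, hWb, hzW, hWU⟩ := hb.mem_nhds_iff.1 hU
  obtain ⟨k, rfl⟩ := subset_range_enumerate hbc ∅ hWb
  filter_upwards [eventually_gt_atTop k] with n hn y hy
  exact hWU ((congrFun hy ⟨k, hn⟩).mpr hzW)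

namespace MeasureTheory

theorem Measure.rnDeriv_le_of_le_smul {α : Type*} [MeasurableSpace α] {ρ μ : Measure α}
    [SigmaFinite μ] {c : ℝ≥0∞} (h : ρ ≤ c • μ) : ∀ᵐ x ∂μ, ρ.rnDeriv μ x ≤ c := by
  refine ae_le_of_forall_setLIntegral_le_of_sigmaFinite (ρ.measurable_rnDeriv μ) fun s _ _ => ?_
  rw [setLIntegral_const]
  exact (Measure.setLIntegral_rnDeriv_le s).trans (h s)

theorem abs_integral_sub_le_of_ae_mem {α : Type*} [MeasurableSpace α] {ρ : Measure α}
    [IsProbabilityMeasure ρ] {S : Set α} (hS : ∀ᵐ x ∂ρ, x ∈ S) {g : α → ℝ} (hg : Integrable g ρ)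
    {c D : ℝ} (h : ∀ x ∈ S, |g x - c| ≤ D) : |∫ x, g x ∂ρ - c| ≤ D := by
  have : ∫ x, g x ∂ρ - c = ∫ x, (g x - c) ∂ρ := by
    rw [integral_sub hg (integrable_const c)]; simp
  rw [this]
  simpa using norm_integral_le_of_norm_le_const (μ := ρ) (f := fun x => g x - c)
    (hS.mono fun x hx => (Real.norm_eq_abs _).trans_le (h x hx))

theorem abs_integral_sub_integral_le_diam {α : Type*} [MeasurableSpace α] [TopologicalSpace α]
    [OpensMeasurableSpace α] (f : α →ᵇ ℝ) {S : Set α} {ρ₁ ρ₂ : Measure α}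
    [IsProbabilityMeasure ρ₁] [IsProbabilityMeasure ρ₂] (h₁ : ∀ᵐ x ∂ρ₁, x ∈ S)
    (h₂ : ∀ᵐ x ∂ρ₂, x ∈ S) : |∫ x, f x ∂ρ₁ - ∫ x, f x ∂ρ₂| ≤ Metric.diam (f '' S) := by
  have hS : Bornology.IsBounded (f '' S) := f.isBounded_range.subset (image_subset_range _ _)
  refine abs_integral_sub_le_of_ae_mem h₁ (f.integrable ρ₁) fun x hx => ?_
  rw [abs_sub_comm]
  refine abs_integral_sub_le_of_ae_mem h₂ (f.integrable ρ₂) fun y hy => ?_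
  exact Metric.dist_le_diam_of_mem hS (mem_image_of_mem f hy) (mem_image_of_mem f hx)

theorem integral_finsetSum_smul_measure {α ι : Type*} [MeasurableSpace α] [TopologicalSpace α]
    [OpensMeasurableSpace α] (f : α →ᵇ ℝ) {s : Finset ι} {w : ι → ℝ≥0∞} {ρ : ι → Measure α}
    [∀ t, IsFiniteMeasure (ρ t)] (hw : ∀ t ∈ s, w t ≠ ∞) :
    ∫ x, f x ∂(∑ t ∈ s, w t • ρ t) = ∑ t ∈ s, (w t).toReal * ∫ x, f x ∂ρ t := by
  rw [integral_finsetSum_measure fun t ht => (f.integrable _).smul_measure (hw t ht)]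
  simp_rw [integral_smul_measure, smul_eq_mul]

theorem integral_comp_eq_sum {α β : Type*} [MeasurableSpace α] [Fintype β] [MeasurableSpace β]
    [MeasurableSingletonClass β] {Φ : α → β} (hΦ : Measurable Φ) (ν : Measure α)
    [IsFiniteMeasure ν] (g : β → ℝ) : ∫ x, g (Φ x) ∂ν = ∑ t, ν.real (Φ ⁻¹' {t}) * g t := by
  rw [← integral_map hΦ.aemeasurable (measurable_of_countable g).aestronglyMeasurable,
    integral_fintype .of_finite]
  simp [Measure.real, Measure.map_apply hΦ (measurableSet_singleton _)]

section Pi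

variable {ι : Type*} {X : ι → Type*} [∀ i, MeasurableSpace (X i)]

theorem measurable_piMap {κ : ι → Type*} [∀ i, MeasurableSpace (κ i)] {q : ∀ i, X i → κ i}
    (hq : ∀ i, Measurable (q i)) : Measurable (Pi.map q) :=
  measurable_pi_lambda _ fun i => (hq i).comp (measurable_pi_apply i)

def IsCoupling (ν : Measure (∀ i, X i)) (μ : ∀ i, Measure (X i)) : Prop :=
  ∀ i, ν.map (fun x => x i) = μ i

theorem Measure.pi_cond_univ_pi [Fintype ι] {μ : ∀ i, Measure (X i)} [∀ i, IsFiniteMeasure (μ i)]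
    {A : ∀ i, Set (X i)} (hA : ∀ i, MeasurableSet (A i)) :
    Measure.pi (fun i => (μ i)[|A i]) = (Measure.pi μ)[|univ.pi A] := by
  refine Measure.pi_eq fun s hs => ?_
  rw [cond_apply (MeasurableSet.univ_pi hA), ← pi_inter_distrib, Measure.pi_pi, Measure.pi_pi,
    ENNReal.prod_inv_distrib fun i _ j _ _ => Or.inr (measure_ne_top _ _),
    ← Finset.prod_mul_distrib]
  simp only [cond_apply (hA _)]

noncomputable def cellwiseProduct [Fintype ι] [DecidableEq ι] {κ : ι → Type*}
    [∀ i, Fintype (κ i)] (μ : ∀ i, Measure (X i)) (ν : Measure (∀ i, X i))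
    (q : ∀ i, X i → κ i) : Measure (∀ i, X i) :=
  ∑ t, ν (Pi.map q ⁻¹' {t}) • (Measure.pi μ)[|Pi.map q ← t]

theorem cellwiseProduct_le_smul_pi [Fintype ι] [DecidableEq ι] {κ : ι → Type*}
    [∀ i, Fintype (κ i)] {μ : ∀ i, Measure (X i)} {ν : Measure (∀ i, X i)}
    {q : ∀ i, X i → κ i} : cellwiseProduct μ ν q ≤
      (∑ t, ν (Pi.map q ⁻¹' {t}) / Measure.pi μ (Pi.map q ⁻¹' {t})) • Measure.pi μ := by
  rw [cellwiseProduct, Finset.sum_smul]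
  refine Finset.sum_le_sum fun t _ => ?_
  rw [div_eq_mul_inv, mul_smul, ProbabilityTheory.cond]
  gcongr
  exact Measure.restrict_le_self

variable {μ : ∀ i, Measure (X i)} {ν : Measure (∀ i, X i)}

theorem IsCoupling.measure_preimage_eval (hν : IsCoupling ν μ) (i : ι) {s : Set (X i)}
    (hs : MeasurableSet s) : ν ((fun x => x i) ⁻¹' s) = μ i s := by
  rw [← hν i, Measure.map_apply (measurable_pi_apply i) hs]

theorem IsCoupling.measure_ne_zero_of_univ_pi (hν : IsCoupling ν μ) {A : ∀ i, Set (X i)}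
    (hA : ∀ i, MeasurableSet (A i)) (h : ν (univ.pi A) ≠ 0) (i : ι) : μ i (A i) ≠ 0 := by
  rw [← hν.measure_preimage_eval i (hA i)]
  exact ne_bot_of_le_ne_bot h (measure_mono fun x hx => hx i (mem_univ i))

variable [Fintype ι] [∀ i, IsProbabilityMeasure (μ i)] {κ : ι → Type*}
  [∀ i, MeasurableSpace (κ i)] [∀ i, MeasurableSingletonClass (κ i)] {q : ∀ i, X i → κ i}

theorem IsCoupling.measure_pi_ne_zero (hν : IsCoupling ν μ) (hq : ∀ i, Measurable (q i))
    {t : ∀ i, κ i} (ht : ν (Pi.map q ⁻¹' {t}) ≠ 0) : Measure.pi μ (Pi.map q ⁻¹' {t}) ≠ 0 := by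
  rw [preimage_piMap_singleton] at ht ⊢
  rw [Measure.pi_pi]
  exact Finset.prod_ne_zero_iff.2 fun i _ =>
    hν.measure_ne_zero_of_univ_pi (fun i => hq i (measurableSet_singleton _)) ht i

theorem IsCoupling.map_eval_cond_piMap_preimage (hν : IsCoupling ν μ)
    (hq : ∀ i, Measurable (q i)) {t : ∀ i, κ i} (ht : ν (Pi.map q ⁻¹' {t}) ≠ 0) (i : ι) :
    ((Measure.pi μ)[|Pi.map q ← t]).map (fun x => x i) = (μ i)[|q i ← t i] := by
  have hA : ∀ j, MeasurableSet (q j ⁻¹' {t j}) := fun j => hq j (measurableSet_singleton _)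
  rw [preimage_piMap_singleton] at ht ⊢
  have := fun j => cond_isProbabilityMeasure (hν.measure_ne_zero_of_univ_pi hA ht j)
  rw [← Measure.pi_cond_univ_pi hA]
  exact (measurePreserving_eval _ i).map_eq

variable [DecidableEq ι] [∀ i, Fintype (κ i)]

theorem IsCoupling.isProbabilityMeasure_cellwiseProduct [IsProbabilityMeasure ν]
    (hν : IsCoupling ν μ) (hq : ∀ i, Measurable (q i)) :
    IsProbabilityMeasure (cellwiseProduct μ ν q) := by
  have hmass : ∀ t, (ν (Pi.map q ⁻¹' {t}) • (Measure.pi μ)[|Pi.map q ← t]) univ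
      = ν (Pi.map q ⁻¹' {t}) := by
    intro t
    rcases eq_or_ne (ν (Pi.map q ⁻¹' {t})) 0 with ht | ht
    · simp [ht]
    · have := cond_isProbabilityMeasure (hν.measure_pi_ne_zero hq ht)
      rw [Measure.smul_apply, measure_univ, smul_eq_mul, mul_one]
  constructor
  rw [cellwiseProduct, Measure.finsetSum_apply, Finset.sum_congr rfl fun t _ => hmass t,
    sum_measure_preimage_singleton _ fun t _ => measurable_piMap hq (measurableSet_singleton t)]
  simp

theorem IsCoupling.cellwiseProduct_map_eval (hν : IsCoupling ν μ)
    (hq : ∀ i, Measurable (q i)) (i : ι) : (cellwiseProduct μ ν q).map (fun x => x i) = μ i := by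
  classical
  have hterm : ∀ t, (ν (Pi.map q ⁻¹' {t}) • (Measure.pi μ)[|Pi.map q ← t]).map (fun x => x i)
      = ν (Pi.map q ⁻¹' {t}) • (μ i)[|q i ← t i] := by
    intro t
    rcases eq_or_ne (ν (Pi.map q ⁻¹' {t})) 0 with ht | ht
    · simp [ht]
    · rw [Measure.map_smul, hν.map_eval_cond_piMap_preimage hq ht]
  have hfiber : ∀ a, ∑ t with t i = a, ν (Pi.map q ⁻¹' {t}) = μ i (q i ⁻¹' {a}) := by
    intro a
    rw [sum_measure_preimage_singleton _ fun t _ => measurable_piMap hq (measurableSet_singleton t),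
      ← hν.measure_preimage_eval i (hq i (measurableSet_singleton a))]
    congr 1
    ext x
    simp [Pi.map]
  calc (cellwiseProduct μ ν q).map (fun x => x i)
      = ∑ t, ν (Pi.map q ⁻¹' {t}) • (μ i)[|q i ← t i] := by
        rw [cellwiseProduct, Measure.map_finset_sum (measurable_pi_apply i).aemeasurable]
        exact Finset.sum_congr rfl fun t _ => hterm t
    _ = ∑ a, (∑ t with t i = a, ν (Pi.map q ⁻¹' {t})) • (μ i)[|q i ← a] := by
        rw [← Finset.sum_fiberwise Finset.univ (fun t => t i)]
        refine Finset.sum_congr rfl fun a _ => ?_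
        rw [Finset.sum_smul]
        exact Finset.sum_congr rfl fun t ht => by rw [(Finset.mem_filter.1 ht).2]
    _ = μ i := by
        simp_rw [hfiber]
        exact sum_meas_smul_cond_fiber (hq i) (μ i)

theorem IsCoupling.exists_cellwiseProduct_le_smul_pi [IsFiniteMeasure ν] (hν : IsCoupling ν μ)
    (hq : ∀ i, Measurable (q i)) : ∃ C < ∞, cellwiseProduct μ ν q ≤ C • Measure.pi μ := by
  refine ⟨_, ENNReal.sum_lt_top.2 fun t _ => ?_, cellwiseProduct_le_smul_pi⟩
  rcases eq_or_ne (ν (Pi.map q ⁻¹' {t})) 0 with ht | ht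
  · simp [ht]
  · exact ENNReal.div_lt_top (measure_ne_top _ _) (hν.measure_pi_ne_zero hq ht)

variable [∀ i, TopologicalSpace (X i)] [OpensMeasurableSpace (∀ i, X i)]

theorem IsCoupling.abs_integral_cellwiseProduct_sub_le [IsFiniteMeasure ν] (hν : IsCoupling ν μ)
    (hq : ∀ i, Measurable (q i)) (f : (∀ i, X i) →ᵇ ℝ) :
    |∫ x, f x ∂cellwiseProduct μ ν q - ∫ x, f x ∂ν|
      ≤ ∫ x, Metric.diam (f '' (Pi.map q ⁻¹' {Pi.map q x})) ∂ν := by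
  set C : (∀ i, κ i) → Set (∀ i, X i) := fun t => Pi.map q ⁻¹' {t}
  have hC : ∀ t, MeasurableSet (C t) := fun t => measurable_piMap hq (measurableSet_singleton t)
  have hν_mix : ∫ x, f x ∂ν = ∑ t, ν.real (C t) * ∫ x, f x ∂ν[|C t] := by
    conv_lhs => rw [← sum_meas_smul_cond_fiber (measurable_piMap hq) ν]
    exact integral_finsetSum_smul_measure f fun t _ => measure_ne_top _ _
  have hprod_mix : ∫ x, f x ∂cellwiseProduct μ ν q
      = ∑ t, ν.real (C t) * ∫ x, f x ∂(Measure.pi μ)[|C t] :=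
    integral_finsetSum_smul_measure f fun t _ => measure_ne_top _ _
  have hcell : ∀ t, ν.real (C t) * |∫ x, f x ∂(Measure.pi μ)[|C t] - ∫ x, f x ∂ν[|C t]|
      ≤ ν.real (C t) * Metric.diam (f '' C t) := by
    intro t
    rcases eq_or_ne (ν (C t)) 0 with ht | ht
    · simp [Measure.real, ht]
    have := cond_isProbabilityMeasure (hν.measure_pi_ne_zero hq ht)
    have := cond_isProbabilityMeasure ht
    exact mul_le_mul_of_nonneg_left
      (abs_integral_sub_integral_le_diam f (ae_cond_mem (hC t)) (ae_cond_mem (hC t)))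
      measureReal_nonneg
  calc |∫ x, f x ∂cellwiseProduct μ ν q - ∫ x, f x ∂ν|
      = |∑ t, ν.real (C t) * (∫ x, f x ∂(Measure.pi μ)[|C t] - ∫ x, f x ∂ν[|C t])| := by
        rw [hprod_mix, hν_mix, ← Finset.sum_sub_distrib]
        simp_rw [mul_sub]
    _ ≤ ∑ t, ν.real (C t) * |∫ x, f x ∂(Measure.pi μ)[|C t] - ∫ x, f x ∂ν[|C t]| := by
        refine (Finset.abs_sum_le_sum_abs _ _).trans_eq (Finset.sum_congr rfl fun t _ => ?_)
        rw [abs_mul, abs_of_nonneg measureReal_nonneg]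
    _ ≤ ∑ t, ν.real (C t) * Metric.diam (f '' C t) := Finset.sum_le_sum fun t _ => hcell t
    _ = ∫ x, Metric.diam (f '' C (Pi.map q x)) ∂ν :=
        (integral_comp_eq_sum (measurable_piMap hq) ν _).symm

theorem IsCoupling.tendsto_integral_cellwiseProduct [IsFiniteMeasure ν] (hν : IsCoupling ν μ)
    {K : ℕ → ι → Type*} [∀ n i, Fintype (K n i)] [∀ n i, MeasurableSpace (K n i)]
    [∀ n i, MeasurableSingletonClass (K n i)] {q : ∀ n i, X i → K n i}
    (hq : ∀ n i, Measurable (q n i))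
    (hshrink : ∀ x, Tendsto (fun n => Pi.map (q n) ⁻¹' {Pi.map (q n) x}) atTop (𝓝 x).smallSets)
    (f : (∀ i, X i) →ᵇ ℝ) :
    Tendsto (fun n => ∫ x, f x ∂cellwiseProduct μ ν (q n)) atTop (𝓝 (∫ x, f x ∂ν)) := by
  have hosc : Tendsto (fun n => ∫ x, Metric.diam (f '' (Pi.map (q n) ⁻¹' {Pi.map (q n) x})) ∂ν)
      atTop (𝓝 0) := by
    simpa using tendsto_integral_of_dominated_convergence (fun _ => Metric.diam (range f))
      (F := fun n x => Metric.diam (f '' (Pi.map (q n) ⁻¹' {Pi.map (q n) x})))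
      (fun n => ((measurable_of_countable fun t => Metric.diam (f '' (Pi.map (q n) ⁻¹' {t}))).comp
        (measurable_piMap (hq n))).aestronglyMeasurable)
      (integrable_const _)
      (fun n => ae_of_all _ fun x => by
        rw [Real.norm_eq_abs, abs_of_nonneg Metric.diam_nonneg]
        exact Metric.diam_mono (image_subset_range _ _) f.isBounded_range)
      (ae_of_all _ fun x =>
        tendsto_diam_image_of_tendsto_smallSets f.continuous.continuousAt (hshrink x))
  rw [tendsto_iff_norm_sub_tendsto_zero]
  exact squeeze_zero (fun n => norm_nonneg _)
    (fun n => hν.abs_integral_cellwiseProduct_sub_le (hq n) f) hosc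

end Pi

end MeasureTheory

/-- discretization of couplings with bounded density (Proposition 2(a)). -/
theorem coupling_approximation_bounded_density
    {d : ℕ} {X : Fin d → Type*}
    [∀ i, TopologicalSpace (X i)] [∀ i, PolishSpace (X i)]
    [∀ i, MeasurableSpace (X i)] [∀ i, BorelSpace (X i)]
    (μ : ∀ i, Measure (X i)) [∀ i, IsProbabilityMeasure (μ i)]
    (ν : Measure (∀ i, X i)) [IsProbabilityMeasure ν]
    (hν : ∀ i, ν.map (fun x => x i) = μ i) :
    ∃ (ν' : ℕ → Measure (∀ i, X i)) (C : ℕ → ℝ≥0∞),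
      (∀ n, IsProbabilityMeasure (ν' n)) ∧
      (∀ n i, (ν' n).map (fun x => x i) = μ i) ∧
      (∀ n, 0 < C n) ∧ (∀ n, C n < ⊤) ∧
      (∀ n, ν' n ≪ Measure.pi μ) ∧
      (∀ n, ∀ᵐ x ∂(Measure.pi μ), (ν' n).rnDeriv (Measure.pi μ) x ≤ C n) ∧
      (∀ f : BoundedContinuousFunction (∀ i, X i) ℝ,
        Tendsto (fun n => ∫ x, f x ∂(ν' n)) atTop (𝓝 (∫ x, f x ∂ν))) := by
  choose q hq hshrink using fun i => exists_measurable_tendsto_smallSets_preimage (X i)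
  have hQ : ∀ n i, Measurable (q i n) := fun n i => hq i n
  have hprob := fun n => IsCoupling.isProbabilityMeasure_cellwiseProduct hν (hQ n)
  choose C hC_lt_top hle using fun n => IsCoupling.exists_cellwiseProduct_le_smul_pi hν (hQ n)
  refine ⟨fun n => cellwiseProduct μ ν fun i => q i n, C, hprob,
    fun n i => IsCoupling.cellwiseProduct_map_eval hν (hQ n) i,
    fun n => zero_lt_one.trans_le (by have := hprob n; simpa using hle n univ), hC_lt_top,
    fun n => Measure.absolutelyContinuous_of_le_smul (hle n),
    fun n => Measure.rnDeriv_le_of_le_smul (hle n),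
    IsCoupling.tendsto_integral_cellwiseProduct hν hQ fun x => ?_⟩
  simp only [preimage_piMap_singleton]
  exact tendsto_univ_pi_smallSets fun i => hshrink i (x i)
end

section
/- Inf-convolution representation of the penalized functional: With φ_1(f) := inf over λ ≥ 0, h_i ∈ C_b(X_i), g ∈ C_b(X) with g(x) ≥ f(x,y) − Σ h_i(y_i) − λc(x,y) of {λρ + Σ ∫ h_i dμ̄_i + ∫ g dμ̄}, and φ_2(f) := ∫ β_γ(f) dθ, it holds that φ_{θ,γ}(f) = inf over f̃ ∈ C_b(X²) of {φ_1(f̃) + φ_2(f − f̃)} for every f ∈ C_b(X²). -/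
/-!
If `f̃` is admissible, the constraint of `φ₁(f̃)` says that the argument
`u = f - g - Σ hᵢ - λc` of `β_γ` in `φ_{θ,γ}(f)` is at most `f - f̃`, so monotonicity of `β_γ`
gives `φ_{θ,γ}(f) ≤ φ₁(f̃) + φ₂(f - f̃)`; here `φ₂(f - f̃)` is finite because `f - f̃` is bounded.
Conversely, for given `(λ, h, g)` the function `u` is continuous and bounded above (as `c ≥ 0`)
but possibly unbounded below. Truncating, `f̃ₙ = f - max(u, -n)` is bounded and continuous,
`(λ, h, g)` is feasible for `φ₁(f̃ₙ)`, and `φ₂(f - f̃ₙ) = ∫ β_γ(max(u, -n)) dθ → ∫ β_γ(u) dθ`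
by dominated convergence.
-/

open MeasureTheory Set Filter
open scoped ENNReal Topology Classical

section Penalized

variable {d : ℕ} {X : Fin d → Type*}
  [∀ i, TopologicalSpace (X i)] [∀ i, PolishSpace (X i)]
  [∀ i, MeasurableSpace (X i)] [∀ i, BorelSpace (X i)]

/-- The penalized dual functional `φ_{θ,γ}` of the paper (eq. (10)): the infimum over
`λ ≥ 0` and bounded continuous `h_i`, `g` of
`λρ + Σᵢ ∫ hᵢ dμ̄ᵢ + ∫ g dμ̄ + ∫ β_γ(f(x,y) − g(x) − Σᵢ hᵢ(yᵢ) − λc(x,y)) dθ`. -/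
noncomputable def phiPen (μbar : Measure (∀ i, X i))
    (θ : Measure ((∀ i, X i) × (∀ i, X i)))
    (c : (∀ i, X i) → (∀ i, X i) → ℝ) (ρ : ℝ) (βγ : ℝ → ℝ)
    (f : ((∀ i, X i) × (∀ i, X i)) → ℝ) : EReal :=
  sInf {w : EReal | ∃ (lam : ℝ) (h : ∀ i, X i → ℝ) (g : (∀ i, X i) → ℝ),
    0 ≤ lam ∧
    (∀ i, Continuous (h i)) ∧ (∀ i, ∃ M : ℝ, ∀ x, |h i x| ≤ M) ∧
    Continuous g ∧ (∃ M : ℝ, ∀ x, |g x| ≤ M) ∧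
    w = ((lam * ρ + (∑ i, ∫ x, h i x ∂(μbar.map (fun y => y i))) +
          ∫ x, g x ∂μbar : ℝ) : EReal) +
        (∫⁻ q, ENNReal.ofReal
          (βγ (f q - g q.1 - (∑ i, h i (q.2 i)) - lam * c q.1 q.2)) ∂θ).toEReal}

/-- The convex conjugate of `φ_{θ,γ}` over `C_b(X²)`. -/
noncomputable def phiPenConj (μbar : Measure (∀ i, X i))
    (θ : Measure ((∀ i, X i) × (∀ i, X i)))
    (c : (∀ i, X i) → (∀ i, X i) → ℝ) (ρ : ℝ) (βγ : ℝ → ℝ)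
    (π : Measure ((∀ i, X i) × (∀ i, X i))) : EReal :=
  ⨆ f : BoundedContinuousFunction ((∀ i, X i) × (∀ i, X i)) ℝ,
    ((∫ q, f q ∂π : ℝ) : EReal) - phiPen μbar θ c ρ βγ (fun q => f q)

/-- The value `∫ β_γ*(dπ/dθ) dθ` in `EReal`, with the convention that it is `+∞`
if `π` is not absolutely continuous w.r.t. `θ` or the integral is infinite. -/
noncomputable def penIntegral {Z : Type*} [MeasurableSpace Z] (θ : Measure Z)
    (βγstar : ℝ → ℝ) (π : Measure Z) : EReal :=
  if π ≪ θ ∧ Integrable (fun q => βγstar ((π.rnDeriv θ q).toReal)) θ then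
    ((∫ q, βγstar ((π.rnDeriv θ q).toReal) ∂θ : ℝ) : EReal)
  else ⊤

/-- The functional `φ₁`: the dual problem with pointwise inequality constraint
`g(x) ≥ f(x,y) − Σᵢ hᵢ(yᵢ) − λ c(x,y)`. -/
noncomputable def phiOne (μbar : Measure (∀ i, X i))
    (c : (∀ i, X i) → (∀ i, X i) → ℝ) (ρ : ℝ)
    (f : ((∀ i, X i) × (∀ i, X i)) → ℝ) : EReal :=
  sInf {w : EReal | ∃ (lam : ℝ) (h : ∀ i, X i → ℝ) (g : (∀ i, X i) → ℝ),
    0 ≤ lam ∧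
    (∀ i, Continuous (h i)) ∧ (∀ i, ∃ M : ℝ, ∀ x, |h i x| ≤ M) ∧
    Continuous g ∧ (∃ M : ℝ, ∀ x, |g x| ≤ M) ∧
    (∀ x y, f (x, y) - (∑ i, h i (y i)) - lam * c x y ≤ g x) ∧
    w = ((lam * ρ + (∑ i, ∫ x, h i x ∂(μbar.map (fun y => y i))) +
          ∫ x, g x ∂μbar : ℝ) : EReal)}

/-- The penalization functional `φ₂(f) = ∫ β_γ(f) dθ`. -/
noncomputable def phiTwo (θ : Measure ((∀ i, X i) × (∀ i, X i))) (βγ : ℝ → ℝ)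
    (f : ((∀ i, X i) × (∀ i, X i)) → ℝ) : EReal :=
  (∫⁻ q, ENNReal.ofReal (βγ (f q)) ∂θ).toEReal

end Penalized

theorem EReal.le_sInf_add_coe {S : Set EReal} {a : EReal} {c : ℝ}
    (h : ∀ w ∈ S, a ≤ w + c) : a ≤ sInf S + c :=
  (EReal.sub_le_iff_le_add (.inl (EReal.coe_ne_bot c)) (.inl (EReal.coe_ne_top c))).1
    (le_sInf fun w hw => EReal.sub_le_of_le_add (h w hw))

theorem abs_max_le_max_abs_of_le {x C a : ℝ} (h : x ≤ C) : |max x a| ≤ max |C| |a| :=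
  abs_le.2 ⟨(neg_le_neg (le_max_right _ _)).trans ((neg_abs_le a).trans (le_max_right _ _)),
    max_le_max (h.trans (le_abs_self C)) (le_abs_self a)⟩

section Lintegral

variable {Z : Type*} [MeasurableSpace Z] {θ : Measure Z} [IsFiniteMeasure θ]
  {φ : ℝ → ℝ} {u : Z → ℝ} {C : ℝ}

theorem lintegral_ofReal_comp_ne_top (hφ : Monotone φ) (hu : ∀ q, u q ≤ C) :
    ∫⁻ q, ENNReal.ofReal (φ (u q)) ∂θ ≠ ⊤ := by
  refine ((lintegral_mono fun q => ENNReal.ofReal_le_ofReal (hφ (hu q))).trans_lt ?_).ne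
  rw [lintegral_const]
  exact ENNReal.mul_lt_top ENNReal.ofReal_lt_top (measure_lt_top θ univ)

theorem tendsto_lintegral_ofReal_comp_max_neg (hφ : Monotone φ) (hu : Measurable u)
    (huC : ∀ q, u q ≤ C) :
    Tendsto (fun n : ℕ => ∫⁻ q, ENNReal.ofReal (φ (max (u q) (-n))) ∂θ) atTop
      (𝓝 (∫⁻ q, ENNReal.ofReal (φ (u q)) ∂θ)) := by
  refine tendsto_lintegral_of_dominated_convergence (fun _ => ENNReal.ofReal (φ (max C 0)))
    (fun n => ENNReal.measurable_ofReal.comp (hφ.measurable.comp (hu.max measurable_const)))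
    (fun n => ae_of_all _ fun q => ENNReal.ofReal_le_ofReal (hφ ?_)) ?_ (ae_of_all _ fun q => ?_)
  · exact max_le_max (huC q) (by simp)
  · simpa [lintegral_const] using ENNReal.mul_ne_top ENNReal.ofReal_ne_top (measure_ne_top θ univ)
  · refine tendsto_const_nhds.congr' ?_
    filter_upwards [tendsto_natCast_atTop_atTop.eventually_ge_atTop (-u q)] with n hn
    rw [max_eq_left (by linarith)]

end Lintegral

section Residual

variable {d : ℕ} {X : Fin d → Type*} {c : (∀ i, X i) → (∀ i, X i) → ℝ}
  {f : ((∀ i, X i) × (∀ i, X i)) → ℝ} {lam : ℝ} {h : ∀ i, X i → ℝ} {g : (∀ i, X i) → ℝ}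

def dualResidual (c : (∀ i, X i) → (∀ i, X i) → ℝ) (f : ((∀ i, X i) × (∀ i, X i)) → ℝ)
    (lam : ℝ) (h : ∀ i, X i → ℝ) (g : (∀ i, X i) → ℝ) (q : (∀ i, X i) × (∀ i, X i)) : ℝ :=
  f q - g q.1 - ∑ i, h i (q.2 i) - lam * c q.1 q.2

theorem continuous_dualResidual [∀ i, TopologicalSpace (X i)]
    (hc : Continuous (Function.uncurry c)) (hf : Continuous f)
    (hh : ∀ i, Continuous (h i)) (hg : Continuous g) : Continuous (dualResidual c f lam h g) :=
  ((hf.sub (hg.comp continuous_fst)).sub (continuous_finsetSum _ fun i _ =>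
    (hh i).comp ((continuous_apply i).comp continuous_snd))).sub (continuous_const.mul hc)

theorem exists_dualResidual_le (hc : ∀ x y, 0 ≤ c x y) (hlam : 0 ≤ lam)
    (hf : ∃ M, ∀ q, |f q| ≤ M) (hh : ∀ i, ∃ M, ∀ x, |h i x| ≤ M) (hg : ∃ M, ∀ x, |g x| ≤ M) :
    ∃ C, ∀ q, dualResidual c f lam h g q ≤ C := by
  obtain ⟨Mf, hMf⟩ := hf
  choose Mh hMh using hh
  obtain ⟨Mg, hMg⟩ := hg
  refine ⟨Mf + Mg + ∑ i, Mh i, fun q => ?_⟩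
  have hsum : -∑ i, Mh i ≤ ∑ i, h i (q.2 i) := by
    rw [← Finset.sum_neg_distrib]
    exact Finset.sum_le_sum fun i _ => neg_le_of_abs_le (hMh i _)
  have := mul_nonneg hlam (hc q.1 q.2)
  have := le_of_abs_le (hMf q)
  have := neg_le_of_abs_le (hMg q.1)
  unfold dualResidual
  linarith

end Residual

section InfConvolution

variable {d : ℕ} {X : Fin d → Type*} [∀ i, TopologicalSpace (X i)] [∀ i, MeasurableSpace (X i)]

noncomputable def phiInfConv (μbar : Measure (∀ i, X i))
    (θ : Measure ((∀ i, X i) × (∀ i, X i)))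
    (c : (∀ i, X i) → (∀ i, X i) → ℝ) (ρ : ℝ) (βγ : ℝ → ℝ)
    (f : ((∀ i, X i) × (∀ i, X i)) → ℝ) : EReal :=
  sInf {w : EReal | ∃ ft : ((∀ i, X i) × (∀ i, X i)) → ℝ,
    Continuous ft ∧ (∃ M : ℝ, ∀ q, |ft q| ≤ M) ∧
    w = phiOne μbar c ρ ft + phiTwo θ βγ (fun q => f q - ft q)}

variable {μbar : Measure (∀ i, X i)} {θ : Measure ((∀ i, X i) × (∀ i, X i))}
  {c : (∀ i, X i) → (∀ i, X i) → ℝ} {ρ : ℝ} {βγ : ℝ → ℝ} {f : ((∀ i, X i) × (∀ i, X i)) → ℝ}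

theorem phiPen_le_phiOne_add_phiTwo [IsFiniteMeasure θ] (hβγ : Monotone βγ)
    {ft : ((∀ i, X i) × (∀ i, X i)) → ℝ} {C : ℝ} (hC : ∀ q, f q - ft q ≤ C) :
    phiPen μbar θ c ρ βγ f ≤ phiOne μbar c ρ ft + phiTwo θ βγ (fun q => f q - ft q) := by
  rw [phiPen, phiTwo, ← EReal.coe_ennreal_toReal (lintegral_ofReal_comp_ne_top hβγ hC)]
  refine EReal.le_sInf_add_coe ?_
  rintro _ ⟨lam, h, g, hlam, hh, hhb, hg, hgb, hfeas, rfl⟩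
  rw [EReal.coe_ennreal_toReal (lintegral_ofReal_comp_ne_top hβγ hC)]
  refine le_trans (sInf_le ⟨lam, h, g, hlam, hh, hhb, hg, hgb, rfl⟩) (add_le_add_right ?_ _)
  exact EReal.coe_ennreal_le_coe_ennreal_iff.2 (lintegral_mono fun ⟨x, y⟩ =>
    ENNReal.ofReal_le_ofReal (hβγ (by linarith [hfeas x y])))

theorem phiInfConv_le_phiOne_add_lintegral_max {u : ((∀ i, X i) × (∀ i, X i)) → ℝ}
    (hf : Continuous f) (hfb : ∃ M, ∀ q, |f q| ≤ M) (hu : Continuous u) {C : ℝ}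
    (huC : ∀ q, u q ≤ C) (a : ℝ) :
    phiInfConv μbar θ c ρ βγ f ≤ phiOne μbar c ρ (fun q => f q - max (u q) a) +
      (∫⁻ q, ENNReal.ofReal (βγ (max (u q) a)) ∂θ).toEReal := by
  obtain ⟨Mf, hMf⟩ := hfb
  refine sInf_le ⟨fun q => f q - max (u q) a, hf.sub (hu.max continuous_const),
    ⟨Mf + max |C| |a|, fun q => ?_⟩, ?_⟩
  · exact (abs_sub _ _).trans (add_le_add (hMf q) (abs_max_le_max_abs_of_le (huC q)))
  · simp only [phiTwo, sub_sub_cancel]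

theorem phiInfConv_le_phiPen [∀ i, SecondCountableTopology (X i)]
    [∀ i, OpensMeasurableSpace (X i)] [IsFiniteMeasure θ] (hc : Continuous (Function.uncurry c))
    (hc0 : ∀ x y, 0 ≤ c x y) (hβγ : Monotone βγ) (hf : Continuous f)
    (hfb : ∃ M, ∀ q, |f q| ≤ M) :
    phiInfConv μbar θ c ρ βγ f ≤ phiPen μbar θ c ρ βγ f := by
  refine le_sInf ?_
  rintro _ ⟨lam, h, g, hlam, hh, hhb, hg, hgb, rfl⟩
  set u := dualResidual c f lam h g
  set V := lam * ρ + ∑ i, ∫ x, h i x ∂μbar.map (fun y => y i) + ∫ x, g x ∂μbar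
  have hu : Continuous u := continuous_dualResidual hc hf hh hg
  obtain ⟨C, hC⟩ := exists_dualResidual_le hc0 hlam hfb hhb hgb
  have htrunc (n : ℕ) : phiInfConv μbar θ c ρ βγ f ≤
      ((V + (∫⁻ q, ENNReal.ofReal (βγ (max (u q) (-n))) ∂θ).toReal : ℝ) : EReal) := by
    have hfin := lintegral_ofReal_comp_ne_top (θ := θ) hβγ fun q => max_le_max_right (-n : ℝ) (hC q)
    rw [EReal.coe_add, EReal.coe_ennreal_toReal hfin]
    refine (phiInfConv_le_phiOne_add_lintegral_max hf hfb hu hC _).trans (add_le_add_left ?_ _)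
    refine sInf_le ⟨lam, h, g, hlam, hh, hhb, hg, hgb, fun x y => ?_, rfl⟩
    have := le_max_left (u (x, y)) (-n)
    simp only [u, dualResidual] at this ⊢
    linarith
  have hP := lintegral_ofReal_comp_ne_top (θ := θ) hβγ hC
  change _ ≤ (V : EReal) + (∫⁻ q, ENNReal.ofReal (βγ (u q)) ∂θ).toEReal
  rw [← EReal.coe_ennreal_toReal hP, ← EReal.coe_add]
  exact ge_of_tendsto' ((continuous_coe_real_ereal.tendsto _).comp (tendsto_const_nhds.add
    ((ENNReal.tendsto_toReal hP).comp
      (tendsto_lintegral_ofReal_comp_max_neg hβγ hu.measurable hC)))) htrunc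

end InfConvolution

section Penalized

variable {d : ℕ} {X : Fin d → Type*}
  [∀ i, TopologicalSpace (X i)] [∀ i, PolishSpace (X i)]
  [∀ i, MeasurableSpace (X i)] [∀ i, BorelSpace (X i)]

theorem phiPen_eq_infConvolution_general
    (μbar : Measure (∀ i, X i))
    (θ : Measure ((∀ i, X i) × (∀ i, X i))) [IsProbabilityMeasure θ]
    (c : (∀ i, X i) → (∀ i, X i) → ℝ)
    (hc_cont : Continuous (Function.uncurry c))
    (hc_nonneg : ∀ x y, 0 ≤ c x y)
    (ρ : ℝ)
    (β : ℝ → ℝ) (hβ_mono : Monotone β)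
    (γ : ℝ) (hγ : 0 < γ)
    (f : ((∀ i, X i) × (∀ i, X i)) → ℝ)
    (hf_cont : Continuous f) (hf_bdd : ∃ M : ℝ, ∀ q, |f q| ≤ M) :
    phiPen μbar θ c ρ (fun x => β (γ * x) / γ) f =
      sInf {w : EReal | ∃ ft : ((∀ i, X i) × (∀ i, X i)) → ℝ,
        Continuous ft ∧ (∃ M : ℝ, ∀ q, |ft q| ≤ M) ∧
        w = phiOne μbar c ρ ft +
            phiTwo θ (fun x => β (γ * x) / γ) (fun q => f q - ft q)} := by
  have hβγ : Monotone fun x => β (γ * x) / γ :=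
    (hβ_mono.comp (monotone_mul_left_of_nonneg hγ.le)).div_const hγ.le
  refine le_antisymm (le_sInf ?_) (phiInfConv_le_phiPen hc_cont hc_nonneg hβγ hf_cont hf_bdd)
  rintro _ ⟨ft, -, ⟨M, hM⟩, rfl⟩
  obtain ⟨Mf, hMf⟩ := hf_bdd
  exact phiPen_le_phiOne_add_phiTwo hβγ fun q =>
    (sub_le_sub (le_of_abs_le (hMf q)) (neg_le_of_abs_le (hM q))).trans_eq (sub_neg_eq_add Mf M)

/-- inf-convolution representation of the penalized functional:
`φ_{θ,γ}(f) = inf_{f̃ ∈ C_b(X²)} { φ₁(f̃) + φ₂(f − f̃) }`. -/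
theorem phiPen_eq_infConvolution
    (μbar : Measure (∀ i, X i)) [IsProbabilityMeasure μbar]
    (θ : Measure ((∀ i, X i) × (∀ i, X i))) [IsProbabilityMeasure θ]
    (c : (∀ i, X i) → (∀ i, X i) → ℝ)
    (hc_cont : Continuous (Function.uncurry c))
    (hc_nonneg : ∀ x y, 0 ≤ c x y) (hc_diag : ∀ x, c x x = 0)
    (ρ : ℝ) (hρ : 0 < ρ)
    (β : ℝ → ℝ) (hβ_conv : ConvexOn ℝ Set.univ β) (hβ_mono : Monotone β)
    (hβ_diff : Differentiable ℝ β) (hβ_nonneg : ∀ x, 0 ≤ β x)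
    (hβ_superlinear : Tendsto (fun x => β x / x) atTop atTop)
    (γ : ℝ) (hγ : 0 < γ)
    (f : ((∀ i, X i) × (∀ i, X i)) → ℝ)
    (hf_cont : Continuous f) (hf_bdd : ∃ M : ℝ, ∀ q, |f q| ≤ M) :
    phiPen μbar θ c ρ (fun x => β (γ * x) / γ) f =
      sInf {w : EReal | ∃ ft : ((∀ i, X i) × (∀ i, X i)) → ℝ,
        Continuous ft ∧ (∃ M : ℝ, ∀ q, |ft q| ≤ M) ∧
        w = phiOne μbar c ρ ft +
            phiTwo θ (fun x => β (γ * x) / γ) (fun q => f q - ft q)} :=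
  phiPen_eq_infConvolution_general μbar θ c hc_cont hc_nonneg ρ β hβ_mono γ hγ f hf_cont hf_bdd

end Penalized
end

section
/- Finite-width error bound: In the setting with p ∈ ℕ, p ≥ 2, β_γ(x) = γ^{p-1}(x⁺)^p, c ∈ L^p(θ): if (λ, h_1,...,h_d, g) is an optimizer of φ_{θ,γ}(f) with sufficient moments and h_1^m,...,h_d^m, g^m are neural network functions approximating h_1,...,h_d, g within ε in the relevant L^p norms (with respect to μ̄_i, μ̄ and θ), then |φ_{θ,γ}(f) − φ^m_{θ,γ}(f)| ≤ C·ε where C depends only on f, λ, c, h_1,...,h_d, g. -/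
/-!
The lower bound `φ ≤ φᵐ` holds because networks of width `m` are bounded continuous functions.
For the upper bound, evaluate the objective of `φᵐ` at `(λ, hᵐ, gᵐ)`. Its linear part exceeds
the optimizer's by at most `(d + 1)ε`, since `‖·‖₁ ≤ ‖·‖_p` for probability measures. Its
integrand is `T + δ`, where `T` is the optimizer's integrand and `‖δ‖_p ≤ (d + 1)ε`. As
`x ↦ x⁺` is monotone and 1-Lipschitz, `(T + δ)⁺ ≤ T⁺ + |δ|`, so Minkowski gives
`‖(T + δ)⁺‖_p ≤ ‖T⁺‖_p + ‖δ‖_p`, and `(a + b)ᵖ ≤ aᵖ + p b (a + b)ᵖ⁻¹` turns this into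
`∫ ((T + δ)⁺)ᵖ dθ ≤ ∫ (T⁺)ᵖ dθ + O(ε)`.
-/

open MeasureTheory Set Filter
open scoped ENNReal Topology Classical

section Penalized

variable {d : ℕ} {X : Fin d → Type*}
  [∀ i, TopologicalSpace (X i)] [∀ i, PolishSpace (X i)]
  [∀ i, MeasurableSpace (X i)] [∀ i, BorelSpace (X i)]

/-- A one-hidden-layer feedforward neural network with `m` hidden neurons and
activation `σ`: `x ↦ Σ_j a_j σ(⟨w_j, x⟩ + b_j) + c₀`. -/
def IsNeuralNet {E : Type*} [NormedAddCommGroup E] [NormedSpace ℝ E]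
    (σ : ℝ → ℝ) (m : ℕ) (h : E → ℝ) : Prop :=
  ∃ (a : Fin m → ℝ) (w : Fin m → E →L[ℝ] ℝ) (b : Fin m → ℝ) (c0 : ℝ),
    ∀ x, h x = (∑ j, a j * σ (w j x + b j)) + c0

/-- The penalized dual functional with the optimization restricted to neural networks
of width `m`. -/
noncomputable def phiPenNN {d : ℕ} {N : Fin d → ℕ} (σ : ℝ → ℝ) (m : ℕ)
    (μbar : Measure (∀ i, Fin (N i) → ℝ))
    (θ : Measure ((∀ i, Fin (N i) → ℝ) × (∀ i, Fin (N i) → ℝ)))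
    (c : (∀ i, Fin (N i) → ℝ) → (∀ i, Fin (N i) → ℝ) → ℝ) (ρ : ℝ) (βγ : ℝ → ℝ)
    (f : ((∀ i, Fin (N i) → ℝ) × (∀ i, Fin (N i) → ℝ)) → ℝ) : EReal :=
  sInf {w : EReal | ∃ (lam : ℝ) (h : ∀ i, (Fin (N i) → ℝ) → ℝ)
      (g : (∀ i, Fin (N i) → ℝ) → ℝ),
    0 ≤ lam ∧ (∀ i, IsNeuralNet σ m (h i)) ∧ IsNeuralNet σ m g ∧
    w = ((lam * ρ + (∑ i, ∫ x, h i x ∂(μbar.map (fun y => y i))) +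
          ∫ x, g x ∂μbar : ℝ) : EReal) +
        (∫⁻ q, ENNReal.ofReal
          (βγ (f q - g q.1 - (∑ i, h i (q.2 i)) - lam * c q.1 q.2)) ∂θ).toEReal}

theorem add_pow_le_pow_add_mul_pow {x b : ℝ} (hx : 0 ≤ x) (hb : 0 ≤ b) (p : ℕ) :
    (x + b) ^ p ≤ x ^ p + p * b * (x + b) ^ (p - 1) := by
  have h := abs_pow_sub_pow_le (x + b) x p
  rw [add_sub_cancel_left, abs_of_nonneg hb, abs_of_nonneg (add_nonneg hx hb),
    abs_of_nonneg hx, max_eq_left (le_add_of_nonneg_right hb)] at h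
  linarith [le_abs_self ((x + b) ^ p - x ^ p)]

section Lp

variable {α : Type*} [MeasurableSpace α] {μ : Measure α}

theorem lintegral_ofReal_mul_max_pow {u : α → ℝ} {a : ℝ} (ha : 0 ≤ a) {p : ℕ} (hp : p ≠ 0) :
    ∫⁻ x, ENNReal.ofReal (a * max (u x) 0 ^ p) ∂μ =
      ENNReal.ofReal a * eLpNorm (fun x => max (u x) 0) p μ ^ p := by
  have hp' : ((p : NNReal) : ℝ) = p := rfl
  have := eLpNorm_nnreal_pow_eq_lintegral (μ := μ) (f := fun x => max (u x) 0)
    (p := (p : NNReal)) (by exact_mod_cast hp)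
  simp only [ENNReal.coe_natCast, hp', ENNReal.rpow_natCast] at this
  rw [this, ← lintegral_const_mul' _ _ ENNReal.ofReal_ne_top]
  refine lintegral_congr fun x => ?_
  rw [Real.enorm_of_nonneg (le_max_right _ _), ← ENNReal.ofReal_pow (le_max_right _ _),
    ENNReal.ofReal_mul ha]

theorem eLpNorm_max_add_le {u δ : α → ℝ} (hu : AEStronglyMeasurable u μ)
    (hδ : AEStronglyMeasurable δ μ) {p : ℝ≥0∞} (hp : 1 ≤ p) :
    eLpNorm (fun x => max (u x + δ x) 0) p μ ≤
      eLpNorm (fun x => max (u x) 0) p μ + eLpNorm δ p μ := by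
  have hpos : ∀ x, ‖max (u x + δ x) 0‖ ≤ max (u x) 0 + |δ x| := fun x => by
    rw [Real.norm_of_nonneg (le_max_right _ _)]
    exact max_le (add_le_add (le_max_left _ _) (le_abs_self _)) (by positivity)
  calc eLpNorm (fun x => max (u x + δ x) 0) p μ
      ≤ eLpNorm (fun x => max (u x) 0 + |δ x|) p μ := eLpNorm_mono_real hpos
    _ ≤ eLpNorm (fun x => max (u x) 0) p μ + eLpNorm (fun x => |δ x|) p μ :=
      eLpNorm_add_le (hu.sup aestronglyMeasurable_const) hδ.norm hp
    _ = eLpNorm (fun x => max (u x) 0) p μ + eLpNorm δ p μ := by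
      simp only [← Real.norm_eq_abs, eLpNorm_norm]

theorem lintegral_ofReal_mul_max_add_pow_le {u δ : α → ℝ} {p : ℕ} (hp : p ≠ 0)
    (hu : MemLp u p μ) (hδ : AEStronglyMeasurable δ μ) {a B : ℝ} (ha : 0 ≤ a) (hB : 0 ≤ B)
    (hδB : eLpNorm δ p μ ≤ ENNReal.ofReal B) :
    ∫⁻ x, ENNReal.ofReal (a * max (u x + δ x) 0 ^ p) ∂μ ≤
      ∫⁻ x, ENNReal.ofReal (a * max (u x) 0 ^ p) ∂μ +
        ENNReal.ofReal (a * p * B * ((eLpNorm u p μ).toReal + B) ^ (p - 1)) := by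
  rw [lintegral_ofReal_mul_max_pow ha hp, lintegral_ofReal_mul_max_pow ha hp]
  set X := eLpNorm (fun x => max (u x) 0) p μ
  have hXu : X ≤ eLpNorm u p μ := eLpNorm_mono fun x => by
    rw [Real.norm_of_nonneg (le_max_right _ _), Real.norm_eq_abs]
    exact max_le (le_abs_self _) (abs_nonneg _)
  have hX : X ≠ ⊤ := ne_top_of_le_ne_top hu.eLpNorm_ne_top hXu
  have hx : X.toReal ≤ (eLpNorm u p μ).toReal := ENNReal.toReal_mono hu.eLpNorm_ne_top hXu
  have hY : eLpNorm (fun x => max (u x + δ x) 0) p μ ≤ ENNReal.ofReal (X.toReal + B) := by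
    rw [ENNReal.ofReal_add ENNReal.toReal_nonneg hB, ENNReal.ofReal_toReal hX]
    exact (eLpNorm_max_add_le hu.1 hδ (by exact_mod_cast Nat.one_le_iff_ne_zero.2 hp)).trans
      (add_le_add le_rfl hδB)
  calc ENNReal.ofReal a * eLpNorm (fun x => max (u x + δ x) 0) p μ ^ p
      ≤ ENNReal.ofReal a * ENNReal.ofReal ((X.toReal + B) ^ p) := by
        rw [ENNReal.ofReal_pow (by positivity)]
        gcongr
    _ ≤ ENNReal.ofReal a *
          ENNReal.ofReal (X.toReal ^ p + p * B * ((eLpNorm u p μ).toReal + B) ^ (p - 1)) := by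
        gcongr
        exact (add_pow_le_pow_add_mul_pow ENNReal.toReal_nonneg hB p).trans (by gcongr)
    _ = ENNReal.ofReal a * X ^ p +
          ENNReal.ofReal (a * p * B * ((eLpNorm u p μ).toReal + B) ^ (p - 1)) := by
        rw [ENNReal.ofReal_add (by positivity) (by positivity), mul_add,
          ENNReal.ofReal_pow ENNReal.toReal_nonneg, ENNReal.ofReal_toReal hX,
          ← ENNReal.ofReal_mul ha, mul_assoc a, mul_assoc a]

theorem integral_le_integral_add_of_eLpNorm_sub_le [IsProbabilityMeasure μ] {u v : α → ℝ}
    (hu : Integrable u μ) (hv : Integrable v μ) {p : ℝ≥0∞} (hp : 1 ≤ p) {ε : ℝ} (hε : 0 ≤ ε)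
    (huv : eLpNorm (fun x => u x - v x) p μ ≤ ENNReal.ofReal ε) :
    ∫ x, v x ∂μ ≤ ∫ x, u x ∂μ + ε := by
  have h : ENNReal.ofReal |∫ x, u x - v x ∂μ| ≤ ENNReal.ofReal ε := by
    rw [← Real.enorm_eq_ofReal_abs]
    calc ‖∫ x, u x - v x ∂μ‖ₑ ≤ ∫⁻ x, ‖u x - v x‖ₑ ∂μ := enorm_integral_le_lintegral_enorm _
      _ = eLpNorm (fun x => u x - v x) 1 μ := eLpNorm_one_eq_lintegral_enorm.symm
      _ ≤ eLpNorm (fun x => u x - v x) p μ :=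
        eLpNorm_le_eLpNorm_of_exponent_le hp (hu.sub hv).aestronglyMeasurable
      _ ≤ ENNReal.ofReal ε := huv
  rw [ENNReal.ofReal_le_ofReal_iff hε, integral_sub hu hv] at h
  linarith [neg_abs_le (∫ x, u x ∂μ - ∫ x, v x ∂μ)]

theorem eLpNorm_add_sum_le {E : Type*} [NormedAddCommGroup E] {ι : Type*} (s : Finset ι)
    {f : α → E} {F : ι → α → E} (hf : AEStronglyMeasurable f μ)
    (hF : ∀ i ∈ s, AEStronglyMeasurable (F i) μ) {p : ℝ≥0∞} (hp : 1 ≤ p) {r : ℝ≥0∞}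
    (hfr : eLpNorm f p μ ≤ r) (hFr : ∀ i ∈ s, eLpNorm (F i) p μ ≤ r) :
    eLpNorm (fun x => f x + ∑ i ∈ s, F i x) p μ ≤ (s.card + 1) * r := by
  calc eLpNorm (fun x => f x + ∑ i ∈ s, F i x) p μ
      ≤ eLpNorm f p μ + eLpNorm (∑ i ∈ s, F i) p μ := by
        simp_rw [← Finset.sum_apply]
        exact eLpNorm_add_le hf (Finset.aestronglyMeasurable_sum s hF) hp
    _ ≤ r + ∑ i ∈ s, eLpNorm (F i) p μ := add_le_add hfr (eLpNorm_sum_le hF hp)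
    _ ≤ r + ∑ _i ∈ s, r := add_le_add le_rfl (Finset.sum_le_sum hFr)
    _ = (s.card + 1) * r := by rw [Finset.sum_const, nsmul_eq_mul]; ring

theorem Continuous.integrable_of_abs_le [TopologicalSpace α] [OpensMeasurableSpace α]
    [IsFiniteMeasure μ] {u : α → ℝ} (hu : Continuous u) {M : ℝ} (hM : ∀ x, |u x| ≤ M) :
    Integrable u μ :=
  Integrable.of_bound hu.aestronglyMeasurable M (ae_of_all _ hM)

end Lp

namespace IsNeuralNet

variable {E : Type*} [NormedAddCommGroup E] [NormedSpace ℝ E] {σ : ℝ → ℝ} {m : ℕ} {u : E → ℝ}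

theorem continuous (hσ : Continuous σ) (hu : IsNeuralNet σ m u) : Continuous u := by
  obtain ⟨a, w, b, c0, hu⟩ := hu
  rw [funext hu]
  fun_prop

theorem exists_abs_le (hσ : ∃ M, ∀ x, |σ x| ≤ M) (hu : IsNeuralNet σ m u) :
    ∃ M, ∀ x, |u x| ≤ M := by
  obtain ⟨a, w, b, c0, hu⟩ := hu
  obtain ⟨M, hM⟩ := hσ
  refine ⟨∑ j, |a j| * M + |c0|, fun x => ?_⟩
  rw [hu]
  refine (abs_add_le _ _).trans (add_le_add ((Finset.abs_sum_le_sum_abs _ _).trans ?_) le_rfl)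
  gcongr with j
  rw [abs_mul]
  exact mul_le_mul_of_nonneg_left (hM _) (abs_nonneg _)

end IsNeuralNet

theorem phiPen_le_phiPenNN {d : ℕ} {N : Fin d → ℕ} {σ : ℝ → ℝ} (hσ : Continuous σ)
    (hσ_bdd : ∃ M, ∀ x, |σ x| ≤ M) (m : ℕ) (μbar : Measure (∀ i, Fin (N i) → ℝ))
    (θ : Measure ((∀ i, Fin (N i) → ℝ) × (∀ i, Fin (N i) → ℝ)))
    (c : (∀ i, Fin (N i) → ℝ) → (∀ i, Fin (N i) → ℝ) → ℝ) (ρ : ℝ) (βγ : ℝ → ℝ)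
    (f : ((∀ i, Fin (N i) → ℝ) × (∀ i, Fin (N i) → ℝ)) → ℝ) :
    phiPen μbar θ c ρ βγ f ≤ phiPenNN σ m μbar θ c ρ βγ f := by
  refine sInf_le_sInf ?_
  rintro w ⟨lam, h, g, hlam, hh, hg, rfl⟩
  exact ⟨lam, h, g, hlam, fun i => (hh i).continuous hσ, fun i => (hh i).exists_abs_le hσ_bdd,
    hg.continuous hσ, hg.exists_abs_le hσ_bdd, rfl⟩

theorem EReal.coe_add_coe_ennreal_le {L L' r s : ℝ} {I I' : ℝ≥0∞} (hL : L' ≤ L + r)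
    (hI : I' ≤ I + ENNReal.ofReal s) (hs : 0 ≤ s) :
    (L' : EReal) + I' ≤ ((L : EReal) + I) + ((r + s : ℝ) : EReal) := by
  have hI' : (I' : EReal) ≤ I + (s : EReal) := by
    simpa [EReal.coe_ennreal_add, EReal.coe_ennreal_ofReal, max_eq_left hs] using
      EReal.coe_ennreal_le_coe_ennreal_iff.2 hI
  calc (L' : EReal) + I' ≤ ((L + r : ℝ) : EReal) + (I + (s : EReal)) :=
        add_le_add (EReal.coe_le_coe_iff.2 hL) hI'
    _ = ((L : EReal) + I) + ((r + s : ℝ) : EReal) := by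
        rw [EReal.coe_add, EReal.coe_add]; ac_rfl

section Objective

variable {ι : Type*} [Fintype ι] {Z : ι → Type*} [∀ i, MeasurableSpace (Z i)]

/-- The objective minimized in `phiPen` and `phiPenNN`, at the candidate `(lam, h, g)`. -/
noncomputable def penObjective (μbar : Measure (∀ i, Z i)) (θ : Measure ((∀ i, Z i) × (∀ i, Z i)))
    (c : (∀ i, Z i) → (∀ i, Z i) → ℝ) (ρ : ℝ) (βγ : ℝ → ℝ) (f : (∀ i, Z i) × (∀ i, Z i) → ℝ)
    (lam : ℝ) (h : ∀ i, Z i → ℝ) (g : (∀ i, Z i) → ℝ) : EReal :=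
  ((lam * ρ + (∑ i, ∫ x, h i x ∂(μbar.map (fun y => y i))) + ∫ x, g x ∂μbar : ℝ) : EReal) +
    (∫⁻ q, ENNReal.ofReal (βγ (f q - g q.1 - (∑ i, h i (q.2 i)) - lam * c q.1 q.2)) ∂θ).toEReal

theorem sum_integral_map_add_integral_le {μbar : Measure (∀ i, Z i)} [IsProbabilityMeasure μbar]
    {h hm : ∀ i, Z i → ℝ} {g gm : (∀ i, Z i) → ℝ}
    (hh : ∀ i, Integrable (h i) (μbar.map (fun y => y i)))
    (hhm : ∀ i, Integrable (hm i) (μbar.map (fun y => y i)))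
    (hg : Integrable g μbar) (hgm : Integrable gm μbar) {p : ℝ≥0∞} (hp : 1 ≤ p) {ε : ℝ}
    (hε : 0 ≤ ε) (hh_ε : ∀ i, eLpNorm (fun x => h i x - hm i x) p (μbar.map (fun y => y i)) ≤
      ENNReal.ofReal ε)
    (hg_ε : eLpNorm (fun x => g x - gm x) p μbar ≤ ENNReal.ofReal ε) :
    (∑ i, ∫ x, hm i x ∂(μbar.map (fun y => y i))) + ∫ x, gm x ∂μbar ≤
      (∑ i, ∫ x, h i x ∂(μbar.map (fun y => y i))) + ∫ x, g x ∂μbar +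
        (Fintype.card ι + 1) * ε := by
  have hsum : ∑ i, ∫ x, hm i x ∂(μbar.map (fun y => y i)) ≤
      ∑ i, (∫ x, h i x ∂(μbar.map (fun y => y i)) + ε) := Finset.sum_le_sum fun i _ =>
    have := Measure.isProbabilityMeasure_map (μ := μbar) (measurable_pi_apply i).aemeasurable
    integral_le_integral_add_of_eLpNorm_sub_le (hh i) (hhm i) hp hε (hh_ε i)
  rw [Finset.sum_add_distrib, Finset.sum_const, Finset.card_univ, nsmul_eq_mul] at hsum
  linarith [integral_le_integral_add_of_eLpNorm_sub_le hg hgm hp hε hg_ε]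

theorem penObjective_le_penObjective_add {μbar : Measure (∀ i, Z i)} [IsProbabilityMeasure μbar]
    {θ : Measure ((∀ i, Z i) × (∀ i, Z i))} {c : (∀ i, Z i) → (∀ i, Z i) → ℝ} {ρ γ : ℝ}
    (hγ : 0 ≤ γ) {p : ℕ} (hp : p ≠ 0) {f : (∀ i, Z i) × (∀ i, Z i) → ℝ} {lam : ℝ}
    {h hm : ∀ i, Z i → ℝ} {g gm : (∀ i, Z i) → ℝ}
    (hh : ∀ i, Integrable (h i) (μbar.map (fun y => y i)))
    (hhm : ∀ i, Integrable (hm i) (μbar.map (fun y => y i)))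
    (hg : Integrable g μbar) (hgm : Integrable gm μbar)
    (hhθ : ∀ i, AEStronglyMeasurable (fun q => h i (q.2 i) - hm i (q.2 i)) θ)
    (hgθ : AEStronglyMeasurable (fun q => g q.1 - gm q.1) θ)
    (hT : MemLp (fun q => f q - g q.1 - (∑ i, h i (q.2 i)) - lam * c q.1 q.2) p θ)
    {ε : ℝ} (hε : 0 ≤ ε)
    (hh_ε : ∀ i, eLpNorm (fun x => h i x - hm i x) p (μbar.map (fun y => y i)) ≤
      ENNReal.ofReal ε)
    (hhθ_ε : ∀ i, eLpNorm (fun q => h i (q.2 i) - hm i (q.2 i)) p θ ≤ ENNReal.ofReal ε)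
    (hg_ε : eLpNorm (fun x => g x - gm x) p μbar ≤ ENNReal.ofReal ε)
    (hgθ_ε : eLpNorm (fun q => g q.1 - gm q.1) p θ ≤ ENNReal.ofReal ε) :
    penObjective μbar θ c ρ (fun x => γ ^ (p - 1) * max x 0 ^ p) f lam hm gm ≤
      penObjective μbar θ c ρ (fun x => γ ^ (p - 1) * max x 0 ^ p) f lam h g +
        (((Fintype.card ι + 1) * ε + γ ^ (p - 1) * p * ((Fintype.card ι + 1) * ε) *
          ((eLpNorm (fun q => f q - g q.1 - (∑ i, h i (q.2 i)) - lam * c q.1 q.2) p θ).toReal +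
            (Fintype.card ι + 1) * ε) ^ (p - 1) : ℝ) : EReal) := by
  have hp1 : (1 : ℝ≥0∞) ≤ p := by exact_mod_cast Nat.one_le_iff_ne_zero.2 hp
  have hδ : eLpNorm (fun q => (g q.1 - gm q.1) + ∑ i, (h i (q.2 i) - hm i (q.2 i))) p θ ≤
      ENNReal.ofReal ((Fintype.card ι + 1) * ε) := by
    refine (eLpNorm_add_sum_le Finset.univ hgθ (fun i _ => hhθ i) hp1 hgθ_ε
      (fun i _ => hhθ_ε i)).trans_eq ?_
    rw [ENNReal.ofReal_mul (by positivity), Finset.card_univ]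
    norm_cast
  have hsplit : ∀ q : (∀ i, Z i) × (∀ i, Z i),
      f q - gm q.1 - (∑ i, hm i (q.2 i)) - lam * c q.1 q.2 =
        (f q - g q.1 - (∑ i, h i (q.2 i)) - lam * c q.1 q.2) +
          ((g q.1 - gm q.1) + ∑ i, (h i (q.2 i) - hm i (q.2 i))) := fun q => by
    rw [Finset.sum_sub_distrib]; ring
  refine EReal.coe_add_coe_ennreal_le ?_ ?_ (by positivity)
  · linarith [sum_integral_map_add_integral_le hh hhm hg hgm hp1 hε hh_ε hg_ε]
  · simp_rw [hsplit]
    exact lintegral_ofReal_mul_max_add_pow_le hp hT (hgθ.add (Finset.aestronglyMeasurable_fun_sum _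
      fun i _ => hhθ i)) (by positivity) (by positivity) hδ

end Objective

theorem phiPenNN_le_penObjective {d : ℕ} {N : Fin d → ℕ} {σ : ℝ → ℝ} {m : ℕ}
    (μbar : Measure (∀ i, Fin (N i) → ℝ))
    (θ : Measure ((∀ i, Fin (N i) → ℝ) × (∀ i, Fin (N i) → ℝ)))
    (c : (∀ i, Fin (N i) → ℝ) → (∀ i, Fin (N i) → ℝ) → ℝ) (ρ : ℝ) (βγ : ℝ → ℝ)
    (f : ((∀ i, Fin (N i) → ℝ) × (∀ i, Fin (N i) → ℝ)) → ℝ) {lam : ℝ} (hlam : 0 ≤ lam)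
    {h : ∀ i, (Fin (N i) → ℝ) → ℝ} {g : (∀ i, Fin (N i) → ℝ) → ℝ}
    (hh : ∀ i, IsNeuralNet σ m (h i)) (hg : IsNeuralNet σ m g) :
    phiPenNN σ m μbar θ c ρ βγ f ≤ penObjective μbar θ c ρ βγ f lam h g :=
  sInf_le ⟨lam, h, g, hlam, hh, hg, rfl⟩

theorem nn_finite_width_error_bound_general
    {d : ℕ} (N : Fin d → ℕ)
    (μbar : Measure (∀ i, Fin (N i) → ℝ)) [IsProbabilityMeasure μbar]
    (θ : Measure ((∀ i, Fin (N i) → ℝ) × (∀ i, Fin (N i) → ℝ)))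
    (c : (∀ i, Fin (N i) → ℝ) → (∀ i, Fin (N i) → ℝ) → ℝ)
    (ρ : ℝ) (γ : ℝ) (hγ : 0 < γ)
    (p : ℕ) (hp : 2 ≤ p)
    (σ : ℝ → ℝ) (hσ_cont : Continuous σ) (hσ_bdd : ∃ M : ℝ, ∀ x, |σ x| ≤ M)
    (f : (∀ i, Fin (N i) → ℝ) → ℝ)
    -- the optimizer (λ, h, g) of φ_{θ,γ}(f), with sufficient moments
    (lam : ℝ) (h : ∀ i, (Fin (N i) → ℝ) → ℝ) (g : (∀ i, Fin (N i) → ℝ) → ℝ)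
    (hlam_nonneg : 0 ≤ lam)
    (hh_cont : ∀ i, Continuous (h i)) (hh_bdd : ∀ i, ∃ M : ℝ, ∀ x, |h i x| ≤ M)
    (hg_cont : Continuous g) (hg_bdd : ∃ M : ℝ, ∀ x, |g x| ≤ M)
    (hmoments : MemLp
      (fun q => f q.2 - g q.1 - (∑ i, h i (q.2 i)) - lam * c q.1 q.2) p θ)
    (hopt : ((lam * ρ + (∑ i, ∫ x, h i x ∂(μbar.map (fun y => y i))) +
          ∫ x, g x ∂μbar : ℝ) : EReal) +
        (∫⁻ q, ENNReal.ofReal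
          ((γ : ℝ) ^ (p - 1) * max (f q.2 - g q.1 - (∑ i, h i (q.2 i)) -
            lam * c q.1 q.2) 0 ^ p) ∂θ).toEReal =
      phiPen μbar θ c ρ (fun x => γ ^ (p - 1) * max x 0 ^ p) (fun q => f q.2)) :
    ∃ C : ℝ, 0 ≤ C ∧
      ∀ ε : ℝ, 0 < ε → ε ≤ 1 →
      ∀ m : ℕ, ∀ hm : ∀ i, (Fin (N i) → ℝ) → ℝ, ∀ gm : (∀ i, Fin (N i) → ℝ) → ℝ,
        (∀ i, IsNeuralNet σ m (hm i)) → IsNeuralNet σ m gm →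
        (∀ i, eLpNorm (fun x => h i x - hm i x) p (μbar.map (fun y => y i)) ≤
          ENNReal.ofReal ε) →
        (∀ i, eLpNorm (fun q => h i (q.2 i) - hm i (q.2 i)) p θ ≤ ENNReal.ofReal ε) →
        eLpNorm (fun x => g x - gm x) p μbar ≤ ENNReal.ofReal ε →
        eLpNorm (fun q => g q.1 - gm q.1) p θ ≤ ENNReal.ofReal ε →
        (phiPenNN σ m μbar θ c ρ (fun x => γ ^ (p - 1) * max x 0 ^ p) (fun q => f q.2) ≤
            phiPen μbar θ c ρ (fun x => γ ^ (p - 1) * max x 0 ^ p) (fun q => f q.2) +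
              ((C * ε : ℝ) : EReal)) ∧
          (phiPen μbar θ c ρ (fun x => γ ^ (p - 1) * max x 0 ^ p) (fun q => f q.2) ≤
            phiPenNN σ m μbar θ c ρ (fun x => γ ^ (p - 1) * max x 0 ^ p) (fun q => f q.2) +
              ((C * ε : ℝ) : EReal)) := by
  set A := (eLpNorm (fun q => f q.2 - g q.1 - (∑ i, h i (q.2 i)) - lam * c q.1 q.2) p θ).toReal
  refine ⟨d + 1 + γ ^ (p - 1) * p * (d + 1) * (A + (d + 1)) ^ (p - 1), by positivity, ?_⟩
  intro ε hε hε1 m hm gm hm_nn gm_nn hh_ε hhθ_ε hg_ε hgθ_ε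
  refine ⟨?_, (phiPen_le_phiPenNN hσ_cont hσ_bdd m μbar θ c ρ _ _).trans
    (le_add_of_nonneg_right (EReal.coe_nonneg.2 (by positivity)))⟩
  have hm_cont i := (hm_nn i).continuous hσ_cont
  have gm_cont := gm_nn.continuous hσ_cont
  -- `ε ≤ 1` makes the constant independent of `ε`.
  have hC : (d + 1) * ε + γ ^ (p - 1) * p * ((d + 1) * ε) * (A + (d + 1) * ε) ^ (p - 1) ≤
      (d + 1 + γ ^ (p - 1) * p * (d + 1) * (A + (d + 1)) ^ (p - 1)) * ε := by
    calc _ ≤ (d + 1) * ε + γ ^ (p - 1) * p * ((d + 1) * ε) * (A + (d + 1)) ^ (p - 1) := by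
          gcongr
          exact mul_le_of_le_one_right (by positivity) hε1
      _ = _ := by ring
  rw [← hopt]
  refine (phiPenNN_le_penObjective _ _ _ _ _ _ hlam_nonneg hm_nn gm_nn).trans <|
    (penObjective_le_penObjective_add hγ.le (by omega)
      (fun i => (hh_cont i).integrable_of_abs_le (hh_bdd i).choose_spec)
      (fun i => (hm_cont i).integrable_of_abs_le ((hm_nn i).exists_abs_le hσ_bdd).choose_spec)
      (hg_cont.integrable_of_abs_le hg_bdd.choose_spec)
      (gm_cont.integrable_of_abs_le (gm_nn.exists_abs_le hσ_bdd).choose_spec)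
      (fun i => by fun_prop) (by fun_prop) hmoments hε.le hh_ε hhθ_ε hg_ε hgθ_ε).trans ?_
  rw [Fintype.card_fin]
  exact add_le_add le_rfl (EReal.coe_le_coe_iff.2 hC)

/-- finite-width error bound (Remark 2): if `(λ, h, g)` is an optimizer
of `φ_{θ,γ}(f)` with sufficient moments and the neural networks approximate
`h₁,...,h_d, g` within `ε` in the relevant `L^p` norms, then
`|φ_{θ,γ}(f) − φ^m_{θ,γ}(f)| ≤ C·ε` for a constant `C` depending only on
`f, λ, c, h₁,...,h_d, g`. -/
theorem nn_finite_width_error_bound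
    {d : ℕ} (N : Fin d → ℕ)
    (μbar : Measure (∀ i, Fin (N i) → ℝ)) [IsProbabilityMeasure μbar]
    (θ : Measure ((∀ i, Fin (N i) → ℝ) × (∀ i, Fin (N i) → ℝ))) [IsProbabilityMeasure θ]
    (c : (∀ i, Fin (N i) → ℝ) → (∀ i, Fin (N i) → ℝ) → ℝ)
    (hc_cont : Continuous (Function.uncurry c))
    (hc_nonneg : ∀ x y, 0 ≤ c x y) (hc_diag : ∀ x, c x x = 0)
    (ρ : ℝ) (hρ : 0 < ρ) (γ : ℝ) (hγ : 0 < γ)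
    (p : ℕ) (hp : 2 ≤ p)
    (hcLp : MemLp (fun q => c q.1 q.2) p θ)
    (σ : ℝ → ℝ) (hσ_cont : Continuous σ) (hσ_bdd : ∃ M : ℝ, ∀ x, |σ x| ≤ M)
    (hσ_nonconst : ∃ x y, σ x ≠ σ y)
    (f : (∀ i, Fin (N i) → ℝ) → ℝ)
    (hf_cont : Continuous f) (hf_bdd : ∃ M : ℝ, ∀ x, |f x| ≤ M)
    -- the optimizer (λ, h, g) of φ_{θ,γ}(f), with sufficient moments
    (lam : ℝ) (h : ∀ i, (Fin (N i) → ℝ) → ℝ) (g : (∀ i, Fin (N i) → ℝ) → ℝ)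
    (hlam_nonneg : 0 ≤ lam)
    (hh_cont : ∀ i, Continuous (h i)) (hh_bdd : ∀ i, ∃ M : ℝ, ∀ x, |h i x| ≤ M)
    (hg_cont : Continuous g) (hg_bdd : ∃ M : ℝ, ∀ x, |g x| ≤ M)
    (hmoments : MemLp
      (fun q => f q.2 - g q.1 - (∑ i, h i (q.2 i)) - lam * c q.1 q.2) p θ)
    (hopt : ((lam * ρ + (∑ i, ∫ x, h i x ∂(μbar.map (fun y => y i))) +
          ∫ x, g x ∂μbar : ℝ) : EReal) +
        (∫⁻ q, ENNReal.ofReal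
          ((γ : ℝ) ^ (p - 1) * max (f q.2 - g q.1 - (∑ i, h i (q.2 i)) -
            lam * c q.1 q.2) 0 ^ p) ∂θ).toEReal =
      phiPen μbar θ c ρ (fun x => γ ^ (p - 1) * max x 0 ^ p) (fun q => f q.2)) :
    ∃ C : ℝ, 0 ≤ C ∧
      ∀ ε : ℝ, 0 < ε → ε ≤ 1 →
      ∀ m : ℕ, ∀ hm : ∀ i, (Fin (N i) → ℝ) → ℝ, ∀ gm : (∀ i, Fin (N i) → ℝ) → ℝ,
        (∀ i, IsNeuralNet σ m (hm i)) → IsNeuralNet σ m gm →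
        (∀ i, eLpNorm (fun x => h i x - hm i x) p (μbar.map (fun y => y i)) ≤
          ENNReal.ofReal ε) →
        (∀ i, eLpNorm (fun q => h i (q.2 i) - hm i (q.2 i)) p θ ≤ ENNReal.ofReal ε) →
        eLpNorm (fun x => g x - gm x) p μbar ≤ ENNReal.ofReal ε →
        eLpNorm (fun q => g q.1 - gm q.1) p θ ≤ ENNReal.ofReal ε →
        (phiPenNN σ m μbar θ c ρ (fun x => γ ^ (p - 1) * max x 0 ^ p) (fun q => f q.2) ≤
            phiPen μbar θ c ρ (fun x => γ ^ (p - 1) * max x 0 ^ p) (fun q => f q.2) +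
              ((C * ε : ℝ) : EReal)) ∧
          (phiPen μbar θ c ρ (fun x => γ ^ (p - 1) * max x 0 ^ p) (fun q => f q.2) ≤
            phiPenNN σ m μbar θ c ρ (fun x => γ ^ (p - 1) * max x 0 ^ p) (fun q => f q.2) +
              ((C * ε : ℝ) : EReal)) :=
  nn_finite_width_error_bound_general N μbar θ c ρ γ hγ p hp σ hσ_cont hσ_bdd f lam h g hlam_nonneg
    hh_cont hh_bdd hg_cont hg_bdd hmoments hopt

end Penalized
end
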